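/- arXiv:1805.02526 — 14 statements merged into one kernel-verified Lean document; each statement's English description precedes it below -/
import Mathlib

section
/- Let d ≥ 1 be a natural number and let Ψ > 0 be a real number satisfying (d+1)(Ψ+1)^d = Ψ^{d+1}. Consider a weighted online resource allocation instance: a finite set R of resources, each resource r having cost function c_r : ℝ_{≥0} → ℝ_{≥0} that is a polynomial with nonnegative coefficients and degree at most d; a sequence of n requests, where request i has weight w_i > 0 and a nonempty set 𝒮_i of feasible allocations (subsets of R). Let S = (S_1,…,S_n) be an allocation vector produced by the best reply algorithm, i.e., for every i and every S' ∈ 𝒮_i, ∑_{r ∈ S_i} w_i·c_r(ℓ_r(i)+w_i) ≤ ∑_{r ∈ S'} w_i·c_r(ℓ_r(i)+w_i), where ℓ_r(i) = ∑_{j < i, r ∈ S_j} w_j. Then for every feasible allocation vector S*, ∑_{r ∈ R} w_r(S)·c_r(w_r(S)) ≤ Ψ^{d+1} · ∑_{r ∈ R} w_r(S*)·c_r(w_r(S*)), where w_r(T) = ∑_{i : r ∈ T_i} w_i. -/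
open Finset

/-!
Smoothness argument. By convexity of `t ↦ t ^ (k + 1)`, adding a request of weight `v` to a
resource with load `u` raises `u * c u` by at most `(d + 1) * v * c (u + v)`; summing along the
arrival order, `C(S)` is at most `d + 1` times the total marginal cost seen by the requests. By the
best reply property and monotonicity of `c`, the marginal cost of request `i` is at most that of
`S*ᵢ` evaluated at the loads `w_r(S) + w_r(S*)`. Jensen's inequality and weighted AM-GM, both tight
at `x = Ψ y`, give `(d + 1) y c(x + y) ≤ λ x c(x) + μ y c(y)` with `λ = d (Ψ + 1)^(d-1) / Ψ^d` and
`μ = (Ψ + 1)^(d-1) (Ψ + d + 1)` (monomials of lower degree reduce to degree `d` after multiplying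
by `max x y ^ (d - k)`). Hence `C(S) ≤ λ C(S) + μ C(S*)`, and the equation defining `Ψ` says
exactly that `μ = (1 - λ) Ψ^(d+1)`.
-/

theorem pow_succ_tangent_le {a b : ℝ} (ha : 0 ≤ a) (hb : 0 ≤ b) (n : ℕ) :
    b ^ (n + 1) + (n + 1) * b ^ n * (a - b) ≤ a ^ (n + 1) := by
  rcases hb.eq_or_lt with rfl | hb
  · cases n <;> simp [ha]
  · have bernoulli :=
      one_add_mul_le_pow (a := a / b - 1) (by linarith [div_nonneg ha hb.le]) (n + 1)
    rw [add_sub_cancel, div_pow, le_div_iff₀ (by positivity)] at bernoulli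
    calc b ^ (n + 1) + (n + 1) * b ^ n * (a - b) = (1 + ↑(n + 1) * (a / b - 1)) * b ^ (n + 1) := by
          rw [pow_succ]; field_simp; push_cast; ring
      _ ≤ a ^ (n + 1) := bernoulli

theorem pow_smooth {Ψ : ℝ} (hΨ : 0 < Ψ) (d : ℕ) {x y : ℝ} (hx : 0 ≤ x) (hy : 0 ≤ y) :
    (d + 1) * (y * (x + y) ^ d) ≤
      d * (Ψ + 1) ^ d / ((Ψ + 1) * Ψ ^ d) * x ^ (d + 1)
        + (Ψ + 1) ^ d * (Ψ + d + 1) / (Ψ + 1) * y ^ (d + 1) := by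
  set z := x / Ψ
  have hxz : x = Ψ * z := (mul_div_cancel₀ x hΨ.ne').symm
  have hz : 0 ≤ z := by positivity
  have jensen : ((x + y) / (Ψ + 1)) ^ d ≤ (Ψ * z ^ d + y ^ d) / (Ψ + 1) := by
    have h := (convexOn_pow d).2 (Set.mem_Ici.2 hz) (Set.mem_Ici.2 hy)
      (show 0 ≤ Ψ / (Ψ + 1) by positivity) (show 0 ≤ 1 / (Ψ + 1) by positivity) (by field_simp)
    simp only [smul_eq_mul] at h
    calc ((x + y) / (Ψ + 1)) ^ d = (Ψ / (Ψ + 1) * z + 1 / (Ψ + 1) * y) ^ d := by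
          rw [hxz]; ring
      _ ≤ _ := h
      _ = (Ψ * z ^ d + y ^ d) / (Ψ + 1) := by ring
  have amgm : (d + 1) * z ^ d * y ≤ y ^ (d + 1) + d * z ^ (d + 1) := by
    linear_combination pow_succ_tangent_le hy hz d
  calc (d + 1) * (y * (x + y) ^ d)
      = (d + 1) * y * ((Ψ + 1) ^ d * ((x + y) / (Ψ + 1)) ^ d) := by
        rw [div_pow]; field_simp
    _ ≤ (d + 1) * y * ((Ψ + 1) ^ d * ((Ψ * z ^ d + y ^ d) / (Ψ + 1))) := by gcongr
    _ = (Ψ + 1) ^ d / (Ψ + 1) * (Ψ * ((d + 1) * z ^ d * y) + (d + 1) * y ^ (d + 1)) := by ring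
    _ ≤ (Ψ + 1) ^ d / (Ψ + 1) * (Ψ * (y ^ (d + 1) + d * z ^ (d + 1)) + (d + 1) * y ^ (d + 1)) := by
        gcongr
    _ = _ := by rw [hxz]; field_simp; ring

theorem pow_smooth_of_le {d k : ℕ} (hk : k ≤ d) {α β x y : ℝ} (hα : 0 ≤ α) (hβ : 0 ≤ β)
    (hx : 0 ≤ x) (hy : 0 ≤ y)
    (h : (d + 1) * (y * (x + y) ^ d) ≤ α * x ^ (d + 1) + β * y ^ (d + 1)) :
    (d + 1) * (y * (x + y) ^ k) ≤ α * x ^ (k + 1) + β * y ^ (k + 1) := by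
  set m := max x y
  rcases (hx.trans (le_max_left x y) : 0 ≤ m).eq_or_lt with hm | hm
  · obtain ⟨rfl, rfl⟩ : x = 0 ∧ y = 0 :=
      ⟨by linarith [le_max_left x y], by linarith [le_max_right x y]⟩
    simp
  obtain ⟨s, rfl⟩ := Nat.exists_eq_add_of_le hk
  refine le_of_mul_le_mul_left ?_ (pow_pos hm s)
  have hmxy : m ≤ x + y := max_le (by linarith) (by linarith)
  calc m ^ s * ((↑(k + s) + 1) * (y * (x + y) ^ k))
      = (↑(k + s) + 1) * (y * ((x + y) ^ k * m ^ s)) := by ring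
    _ ≤ (↑(k + s) + 1) * (y * ((x + y) ^ k * (x + y) ^ s)) := by gcongr
    _ = (↑(k + s) + 1) * (y * (x + y) ^ (k + s)) := by rw [pow_add]
    _ ≤ α * x ^ (k + s + 1) + β * y ^ (k + s + 1) := h
    _ = α * (x ^ (k + 1) * x ^ s) + β * (y ^ (k + 1) * y ^ s) := by ring
    _ ≤ α * (x ^ (k + 1) * m ^ s) + β * (y ^ (k + 1) * m ^ s) := by
        gcongr
        · exact le_max_left x y
        · exact le_max_right x y
    _ = m ^ s * (α * x ^ (k + 1) + β * y ^ (k + 1)) := by ring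

namespace Polynomial

variable {p : ℝ[X]} {d : ℕ}

theorem monotoneOn_eval_of_coeff_nonneg (hc : ∀ k, 0 ≤ p.coeff k) :
    MonotoneOn p.eval (Set.Ici 0) := by
  intro x hx y _ hxy
  simp only [eval_eq_sum_range]
  gcongr with k
  exact hc k

theorem mul_eval_add_le (hdeg : p.natDegree ≤ d) (hc : ∀ k, 0 ≤ p.coeff k) {u v : ℝ}
    (hu : 0 ≤ u) (hv : 0 ≤ v) :
    (u + v) * p.eval (u + v) ≤ u * p.eval u + (d + 1) * (v * p.eval (u + v)) := by
  simp only [eval_eq_sum_range' (Nat.lt_succ_of_le hdeg), mul_sum, ← sum_add_distrib]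
  refine sum_le_sum fun k hk => ?_
  have hkd : (k : ℝ) ≤ d := by exact_mod_cast Nat.lt_succ_iff.mp (mem_range.mp hk)
  have tangent := pow_succ_tangent_le hu (add_nonneg hu hv) k
  have hpow : (u + v) ^ (k + 1) ≤ u ^ (k + 1) + (d + 1) * (v * (u + v) ^ k) := by
    nlinarith [mul_nonneg hv (pow_nonneg (add_nonneg hu hv) k)]
  calc (u + v) * (p.coeff k * (u + v) ^ k) = p.coeff k * (u + v) ^ (k + 1) := by ring
    _ ≤ p.coeff k * (u ^ (k + 1) + (d + 1) * (v * (u + v) ^ k)) := by gcongr; exact hc k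
    _ = _ := by ring

theorem smooth_of_pow_smooth (hdeg : p.natDegree ≤ d) (hc : ∀ k, 0 ≤ p.coeff k) {α β x y : ℝ}
    (hα : 0 ≤ α) (hβ : 0 ≤ β) (hx : 0 ≤ x) (hy : 0 ≤ y)
    (h : (d + 1) * (y * (x + y) ^ d) ≤ α * x ^ (d + 1) + β * y ^ (d + 1)) :
    (d + 1) * (y * p.eval (x + y)) ≤ α * (x * p.eval x) + β * (y * p.eval y) := by
  simp only [eval_eq_sum_range' (Nat.lt_succ_of_le hdeg), mul_sum, ← sum_add_distrib]
  refine sum_le_sum fun k hk => ?_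
  calc (d + 1) * (y * (p.coeff k * (x + y) ^ k)) = p.coeff k * ((d + 1) * (y * (x + y) ^ k)) := by
        ring
    _ ≤ p.coeff k * (α * x ^ (k + 1) + β * y ^ (k + 1)) := by
        gcongr
        · exact hc k
        · exact pow_smooth_of_le (Nat.lt_succ_iff.mp (mem_range.mp hk)) hα hβ hx hy h
    _ = _ := by ring

end Polynomial

theorem apply_sum_le_sum_of_increment_le {ι : Type*} [LinearOrder ι] (F G : ℝ → ℝ)
    (hF0 : F 0 = 0) (hinc : ∀ u v, 0 ≤ u → 0 ≤ v → F (u + v) ≤ F u + v * G (u + v))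
    {w : ι → ℝ} (hw : ∀ i, 0 ≤ w i) (T : Finset ι) :
    F (∑ i ∈ T, w i) ≤ ∑ i ∈ T, w i * G (∑ j ∈ T.filter (· < i), w j + w i) := by
  induction T using Finset.induction_on_max with
  | empty => simp [hF0]
  | insert a T hlt ih =>
    have ha : a ∉ T := fun h => lt_irrefl a (hlt a h)
    have hbefore_a : (insert a T).filter (· < a) = T := by
      rw [filter_insert, if_neg (lt_irrefl a), filter_true_of_mem hlt]
    have hbefore : ∀ i ∈ T, (insert a T).filter (· < i) = T.filter (· < i) := fun i hi => by
      rw [filter_insert, if_neg (lt_asymm (hlt i hi))]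
    have hrest : ∑ i ∈ T, w i * G (∑ j ∈ (insert a T).filter (· < i), w j + w i)
        = ∑ i ∈ T, w i * G (∑ j ∈ T.filter (· < i), w j + w i) :=
      sum_congr rfl fun i hi => by rw [hbefore i hi]
    rw [sum_insert ha, sum_insert ha, hbefore_a, hrest, add_comm (w a)]
    linarith [hinc (∑ j ∈ T, w j) (w a) (sum_nonneg fun j _ => hw j) (hw a)]

section BestReply

variable {ι R : Type*} [Fintype ι] [DecidableEq R]

def load (T : ι → Finset R) (w : ι → ℝ) (r : R) : ℝ :=
  ∑ i ∈ univ.filter (fun i => r ∈ T i), w i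

def loadBefore [LinearOrder ι] (T : ι → Finset R) (w : ι → ℝ) (i : ι) (r : R) : ℝ :=
  ∑ j ∈ univ.filter (fun j => j < i ∧ r ∈ T j), w j

def cost [Fintype R] (f : R → ℝ → ℝ) (T : ι → Finset R) (w : ι → ℝ) : ℝ :=
  ∑ r, load T w r * f r (load T w r)

theorem sum_sum_mem_eq_sum_sum_filter [Fintype R] (T : ι → Finset R) (g : ι → R → ℝ) :
    ∑ i, ∑ r ∈ T i, g i r = ∑ r, ∑ i ∈ univ.filter (fun i => r ∈ T i), g i r :=
  sum_comm' fun i r => by simp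

theorem loadBefore_add_le [LinearOrder ι] {T : ι → Finset R} {w : ι → ℝ} (hw : ∀ i, 0 ≤ w i)
    {i : ι} {r : R} (T' : ι → Finset R) (hr : r ∈ T' i) :
    loadBefore T w i r + w i ≤ load T w r + load T' w r := by
  gcongr
  · exact sum_le_sum_of_subset_of_nonneg
      (fun j => by simp only [mem_filter, mem_univ, true_and]; exact And.right) fun j _ _ => hw j
  · exact single_le_sum (fun j _ => hw j) (by simpa using hr)

theorem cost_le_mul_sum_marginal [LinearOrder ι] [Fintype R] (f : R → ℝ → ℝ) {K : ℝ}
    (hmarg : ∀ r u v, 0 ≤ u → 0 ≤ v → (u + v) * f r (u + v) ≤ u * f r u + K * (v * f r (u + v)))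
    {w : ι → ℝ} (hw : ∀ i, 0 ≤ w i) (S : ι → Finset R) :
    cost f S w ≤ K * ∑ i, ∑ r ∈ S i, w i * f r (loadBefore S w i r + w i) := by
  rw [sum_sum_mem_eq_sum_sum_filter, mul_sum]
  refine sum_le_sum fun r _ => ?_
  have hprefix : ∀ i, (univ.filter fun i => r ∈ S i).filter (· < i)
      = univ.filter (fun j => j < i ∧ r ∈ S j) := fun i => by
    rw [filter_filter]; simp only [and_comm]
  have htelescope := apply_sum_le_sum_of_increment_le (fun x => x * f r x) (fun x => K * f r x)
    (zero_mul _) (fun u v hu hv => by linarith [hmarg r u v hu hv]) hw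
    (univ.filter fun i => r ∈ S i)
  simp only [hprefix] at htelescope
  simpa only [load, loadBefore, mul_sum, mul_left_comm K] using htelescope

theorem cost_le_of_smooth [LinearOrder ι] [Fintype R] (f : R → ℝ → ℝ) {K α β : ℝ} (hK : 0 ≤ K)
    (hmono : ∀ r, MonotoneOn (f r) (Set.Ici 0))
    (hmarg : ∀ r u v, 0 ≤ u → 0 ≤ v → (u + v) * f r (u + v) ≤ u * f r u + K * (v * f r (u + v)))
    (hsmooth : ∀ r x y, 0 ≤ x → 0 ≤ y →
      K * (y * f r (x + y)) ≤ α * (x * f r x) + β * (y * f r y))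
    {w : ι → ℝ} (hw : ∀ i, 0 ≤ w i) {S Sstar : ι → Finset R}
    (hbr : ∀ i, ∑ r ∈ S i, w i * f r (loadBefore S w i r + w i)
      ≤ ∑ r ∈ Sstar i, w i * f r (loadBefore S w i r + w i)) :
    cost f S w ≤ α * cost f S w + β * cost f Sstar w := by
  have load_nonneg : ∀ (T : ι → Finset R) r, 0 ≤ load T w r :=
    fun T r => sum_nonneg fun i _ => hw i
  calc cost f S w
      ≤ K * ∑ i, ∑ r ∈ S i, w i * f r (loadBefore S w i r + w i) :=
        cost_le_mul_sum_marginal f hmarg hw S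
    _ ≤ K * ∑ i, ∑ r ∈ Sstar i, w i * f r (load S w r + load Sstar w r) := by
        gcongr with i
        refine (hbr i).trans (sum_le_sum fun r hr => ?_)
        have hbefore_nonneg : 0 ≤ loadBefore S w i r + w i :=
          add_nonneg (sum_nonneg fun j _ => hw j) (hw i)
        exact mul_le_mul_of_nonneg_left (hmono r hbefore_nonneg
          (hbefore_nonneg.trans (loadBefore_add_le hw Sstar hr)) (loadBefore_add_le hw Sstar hr))
          (hw i)
    _ = ∑ r, K * (load Sstar w r * f r (load S w r + load Sstar w r)) := by
        rw [sum_sum_mem_eq_sum_sum_filter, mul_sum]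
        simp only [load, sum_mul]
    _ ≤ ∑ r, (α * (load S w r * f r (load S w r))
          + β * (load Sstar w r * f r (load Sstar w r))) :=
        sum_le_sum fun r _ => hsmooth r _ _ (load_nonneg S r) (load_nonneg Sstar r)
    _ = α * cost f S w + β * cost f Sstar w := by
        simp only [cost, sum_add_distrib, mul_sum]

end BestReply

theorem best_reply_weighted_competitive_general
    (d : ℕ) (Ψ : ℝ) (hΨpos : 0 < Ψ)
    (hΨ : ((d : ℝ) + 1) * (Ψ + 1) ^ d = Ψ ^ (d + 1))
    (R : Type) [Fintype R] [DecidableEq R]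
    (c : R → Polynomial ℝ)
    (hdeg : ∀ r, (c r).natDegree ≤ d)
    (hcoeff : ∀ r k, 0 ≤ (c r).coeff k)
    (n : ℕ) (w : Fin n → ℝ) (hw : ∀ i, 0 < w i)
    (𝒮 : Fin n → Set (Finset R))
    (S : Fin n → Finset R)
    -- the best reply property: each request minimizes its own marginal cost
    (hbr : ∀ i : Fin n, ∀ S' ∈ 𝒮 i,
      ∑ r ∈ S i, w i * (c r).eval
          ((∑ j ∈ Finset.univ.filter (fun j : Fin n => j < i ∧ r ∈ S j), w j) + w i)
        ≤ ∑ r ∈ S', w i * (c r).eval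
          ((∑ j ∈ Finset.univ.filter (fun j : Fin n => j < i ∧ r ∈ S j), w j) + w i))
    (Sstar : Fin n → Finset R) (hSstar : ∀ i, Sstar i ∈ 𝒮 i) :
    ∑ r : R, (∑ i ∈ Finset.univ.filter (fun i : Fin n => r ∈ S i), w i)
        * (c r).eval (∑ i ∈ Finset.univ.filter (fun i : Fin n => r ∈ S i), w i)
      ≤ Ψ ^ (d + 1)
        * ∑ r : R, (∑ i ∈ Finset.univ.filter (fun i : Fin n => r ∈ Sstar i), w i)
            * (c r).eval (∑ i ∈ Finset.univ.filter (fun i : Fin n => r ∈ Sstar i), w i) := by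
  set α : ℝ := d * (Ψ + 1) ^ d / ((Ψ + 1) * Ψ ^ d)
  set β : ℝ := (Ψ + 1) ^ d * (Ψ + d + 1) / (Ψ + 1)
  have hβ : β = (1 - α) * Ψ ^ (d + 1) := by
    have hαΨ : α * Ψ ^ d = d * (Ψ + 1) ^ d / (Ψ + 1) := by simp only [α]; field_simp
    calc β = (d + 1) * (Ψ + 1) ^ d - d * (Ψ + 1) ^ d / (Ψ + 1) * Ψ := by
          simp only [β]; field_simp; ring
      _ = (1 - α) * Ψ ^ (d + 1) := by rw [hΨ, ← hαΨ]; ring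
  have hα : 0 < 1 - α := pos_of_mul_pos_left (hβ ▸ (by positivity : 0 < β)) (by positivity)
  have key : cost (fun r => (c r).eval) S w
      ≤ α * cost (fun r => (c r).eval) S w + β * cost (fun r => (c r).eval) Sstar w :=
    cost_le_of_smooth (fun r => (c r).eval) (K := d + 1) (by positivity)
      (fun r => (c r).monotoneOn_eval_of_coeff_nonneg (hcoeff r))
      (fun r u v hu hv => (c r).mul_eval_add_le (hdeg r) (hcoeff r) hu hv)
      (fun r x y hx hy => (c r).smooth_of_pow_smooth (hdeg r) (hcoeff r) (by positivity)
        (by positivity) hx hy (pow_smooth hΨpos d hx hy))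
      (fun i => (hw i).le) (fun i => hbr i _ (hSstar i))
  rw [hβ] at key
  show cost (fun r => (c r).eval) S w ≤ Ψ ^ (d + 1) * cost (fun r => (c r).eval) Sstar w
  exact le_of_mul_le_mul_left (by linarith) hα

/-- Competitive ratio `Ψ_d^{d+1}` of the best reply algorithm for weighted resource
allocation problems with polynomial costs of degree at most `d`. -/
theorem best_reply_weighted_competitive
    (d : ℕ) (hd : 1 ≤ d) (Ψ : ℝ) (hΨpos : 0 < Ψ)
    (hΨ : ((d : ℝ) + 1) * (Ψ + 1) ^ d = Ψ ^ (d + 1))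
    (R : Type) [Fintype R] [DecidableEq R]
    (c : R → Polynomial ℝ)
    (hdeg : ∀ r, (c r).natDegree ≤ d)
    (hcoeff : ∀ r k, 0 ≤ (c r).coeff k)
    (n : ℕ) (w : Fin n → ℝ) (hw : ∀ i, 0 < w i)
    (𝒮 : Fin n → Set (Finset R)) (h𝒮 : ∀ i, (𝒮 i).Nonempty)
    (S : Fin n → Finset R) (hS : ∀ i, S i ∈ 𝒮 i)
    -- the best reply property: each request minimizes its own marginal cost
    (hbr : ∀ i : Fin n, ∀ S' ∈ 𝒮 i,
      ∑ r ∈ S i, w i * (c r).eval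
          ((∑ j ∈ Finset.univ.filter (fun j : Fin n => j < i ∧ r ∈ S j), w j) + w i)
        ≤ ∑ r ∈ S', w i * (c r).eval
          ((∑ j ∈ Finset.univ.filter (fun j : Fin n => j < i ∧ r ∈ S j), w j) + w i))
    (Sstar : Fin n → Finset R) (hSstar : ∀ i, Sstar i ∈ 𝒮 i) :
    ∑ r : R, (∑ i ∈ Finset.univ.filter (fun i : Fin n => r ∈ S i), w i)
        * (c r).eval (∑ i ∈ Finset.univ.filter (fun i : Fin n => r ∈ S i), w i)
      ≤ Ψ ^ (d + 1)
        * ∑ r : R, (∑ i ∈ Finset.univ.filter (fun i : Fin n => r ∈ Sstar i), w i)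
            * (c r).eval (∑ i ∈ Finset.univ.filter (fun i : Fin n => r ∈ Sstar i), w i) :=
  best_reply_weighted_competitive_general d Ψ hΨpos hΨ R c hdeg hcoeff n w hw 𝒮 S hbr Sstar hSstar
end

section
/- For every real d ≥ 0, the equation (d+1)(x+1)^d = x^{d+1} has a unique solution x in the positive reals. -/
/-- For every real `d ≥ 0`, the equation `(d+1)(x+1)^d = x^(d+1)` has a unique
positive real solution. -/
theorem psi_exists_unique (d : ℝ) (hd : 0 ≤ d) :
    ∃! x : ℝ, 0 < x ∧ (d + 1) * (x + 1) ^ d = x ^ (d + 1) := by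
  set g : ℝ → ℝ := fun x => x ^ (d + 1) / (x + 1) ^ d with hg
  have hd1 : (0:ℝ) < d + 1 := by linarith
  -- strict monotonicity on [1, ∞)
  have key : ∀ x y : ℝ, 1 ≤ x → x < y → g x < g y := by
    intro x y hx hxy
    have hx0 : (0:ℝ) < x := by linarith
    have hy0 : (0:ℝ) < y := by linarith
    have hx1 : (0:ℝ) < x + 1 := by linarith
    have hy1 : (0:ℝ) < y + 1 := by linarith
    rw [hg]
    simp only
    rw [div_lt_div_iff₀ (Real.rpow_pos_of_pos hx1 d) (Real.rpow_pos_of_pos hy1 d)]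
    have e1 : x ^ (d + 1) * (y + 1) ^ d = x * (x * (y + 1)) ^ d := by
      rw [Real.mul_rpow hx0.le hy1.le, Real.rpow_add hx0, Real.rpow_one]; ring
    have e2 : y ^ (d + 1) * (x + 1) ^ d = y * (y * (x + 1)) ^ d := by
      rw [Real.mul_rpow hy0.le hx1.le, Real.rpow_add hy0, Real.rpow_one]; ring
    rw [e1, e2]
    have hlt : x * (y + 1) < y * (x + 1) := by nlinarith
    have hA : (x * (y + 1)) ^ d ≤ (y * (x + 1)) ^ d :=
      Real.rpow_le_rpow (by positivity) hlt.le hd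
    have hB : (0:ℝ) < (y * (x + 1)) ^ d := Real.rpow_pos_of_pos (by positivity) d
    calc x * (x * (y + 1)) ^ d ≤ x * (y * (x + 1)) ^ d :=
          mul_le_mul_of_nonneg_left hA hx0.le
      _ < y * (y * (x + 1)) ^ d := mul_lt_mul_of_pos_right hxy hB
  -- equation equivalent to g x = d + 1
  have hequiv : ∀ x : ℝ, 0 < x →
      ((d + 1) * (x + 1) ^ d = x ^ (d + 1) ↔ g x = d + 1) := by
    intro x hx
    have h1 : (0:ℝ) < (x + 1) ^ d := Real.rpow_pos_of_pos (by linarith) d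
    rw [hg]
    simp only [div_eq_iff h1.ne']
    constructor <;> intro h <;> linarith
  -- any solution is ≥ 1
  have hge1 : ∀ x : ℝ, 0 < x → g x = d + 1 → 1 ≤ x := by
    intro x hx hgx
    by_contra h
    push_neg at h
    have h1 : (1:ℝ) ≤ (x + 1) ^ d := by
      have := Real.rpow_le_rpow (by norm_num) (by linarith : (1:ℝ) ≤ x + 1) hd
      simpa [Real.one_rpow] using this
    have h2 : x ^ (d + 1) ≤ x := by
      have := Real.rpow_le_rpow_of_exponent_ge hx h.le (by linarith : (1:ℝ) ≤ d + 1)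
      simpa [Real.rpow_one] using this
    have h3 : g x ≤ x ^ (d + 1) := by
      rw [hg]
      simp only
      exact div_le_self (Real.rpow_nonneg hx.le _) h1
    linarith
  -- existence via IVT on [1, b]
  set b : ℝ := 2 ^ d * (d + 1) with hb
  have h2d : (1:ℝ) ≤ 2 ^ d := Real.one_le_rpow (by norm_num) hd
  have hb1 : (1:ℝ) ≤ b := by
    rw [hb]; nlinarith
  have hb0 : (0:ℝ) < b := by linarith
  have hcont : ContinuousOn g (Set.Icc 1 b) := by
    apply ContinuousOn.div
    · exact continuousOn_id.rpow_const fun x hx => Or.inr (by linarith)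
    · exact (continuousOn_id.add continuousOn_const).rpow_const
        fun x hx => Or.inr hd
    · intro x hx
      have : (0:ℝ) < x + 1 := by
        have := hx.1; simp only [Set.mem_Icc] at hx; linarith [hx.1]
      exact (Real.rpow_pos_of_pos this d).ne'
  have hg1 : g 1 ≤ d + 1 := by
    rw [hg]
    simp only [Real.one_rpow]
    have h21 : (0:ℝ) < (1 + 1 : ℝ) ^ d := Real.rpow_pos_of_pos (by norm_num) d
    rw [div_le_iff₀ h21]
    nlinarith [Real.one_le_rpow (by norm_num : (1:ℝ) ≤ 1 + 1) hd]
  have hgb : d + 1 ≤ g b := by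
    have hbd : (0:ℝ) < b ^ d := Real.rpow_pos_of_pos hb0 d
    have hnum : b ^ (d + 1) = b ^ d * b := by
      rw [Real.rpow_add hb0, Real.rpow_one]
    have hden : (b + 1) ^ d ≤ 2 ^ d * b ^ d := by
      rw [← Real.mul_rpow (by norm_num) hb0.le]
      exact Real.rpow_le_rpow (by linarith) (by linarith) hd
    have hden0 : (0:ℝ) < (b + 1) ^ d := Real.rpow_pos_of_pos (by linarith) d
    rw [hg]
    simp only
    rw [le_div_iff₀ hden0]
    calc (d + 1) * (b + 1) ^ d ≤ (d + 1) * (2 ^ d * b ^ d) :=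
          mul_le_mul_of_nonneg_left hden hd1.le
      _ = b ^ d * b := by rw [hb]; ring
      _ = b ^ (d + 1) := hnum.symm
  obtain ⟨c, hc, hgc⟩ := intermediate_value_Icc hb1 hcont ⟨hg1, hgb⟩
  have hc0 : (0:ℝ) < c := by
    have := hc.1; linarith
  refine ⟨c, ⟨hc0, (hequiv c hc0).2 hgc⟩, ?_⟩
  intro y ⟨hy0, hy⟩
  have hgy : g y = d + 1 := (hequiv y hy0).1 hy
  have hy1 : 1 ≤ y := hge1 y hy0 hgy
  have hc1 : 1 ≤ c := hc.1
  rcases lt_trichotomy y c with h | h | h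
  · exact absurd (key y c hy1 h) (by rw [hgy, hgc]; exact lt_irrefl _)
  · exact h
  · exact absurd (key c y hc1 h) (by rw [hgy, hgc]; exact lt_irrefl _)
end

section
/- Let d ≥ 1 be a real number and let Ψ > 0 satisfy (d+1)(Ψ+1)^d = Ψ^{d+1}. Let w > 0 be the real number with w·e^w = d/(d+1). Then d/w − 1 ≤ Ψ ≤ d/w. -/
/-!
Taking logarithms, `Ψ` is the point where the strictly increasing function
`F x = (d + 1) log x - d log (x + 1)` takes the value `log (d + 1)`. Put `t = d / w = (d + 1) e^w`,
so that `log t = log (d + 1) + w` and `d / t = w`. The inequality `log y ≤ y - 1` gives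
`F t ≥ log t - d / t = log (d + 1)` and `F (t - 1) ≤ log t - (d + 1) / t < log (d + 1)`,
hence `t - 1 < Ψ ≤ t`.
-/

open Real Set

noncomputable def psiLog (d x : ℝ) : ℝ := (d + 1) * log x - d * log (x + 1)

lemma log_sub_log_le_div_sub_one {a b : ℝ} (ha : 0 < a) (hb : 0 < b) :
    log a - log b ≤ a / b - 1 := by
  rw [← log_div ha.ne' hb.ne']
  exact log_le_sub_one_of_pos (div_pos ha hb)

lemma strictMonoOn_psiLog {d : ℝ} (hd : 0 ≤ d) : StrictMonoOn (psiLog d) (Ioi 0) := by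
  intro a (ha : 0 < a) b (hb : 0 < b) hab
  have hlog : log a < log b := log_lt_log ha hab
  have hshift : log (b + 1) - log (a + 1) ≤ log b - log a := by
    rw [← log_div (by positivity) (by positivity), ← log_div hb.ne' ha.ne']
    refine log_le_log (by positivity) ?_
    rw [div_le_div_iff₀ (by positivity) ha]
    linarith
  unfold psiLog
  nlinarith [mul_le_mul_of_nonneg_left hshift hd]

lemma psiLog_eq_log_of_rpow_eq {d Ψ : ℝ} (hd : -1 < d) (hΨ₀ : 0 < Ψ)
    (hΨ : (d + 1) * (Ψ + 1) ^ d = Ψ ^ (d + 1)) : psiLog d Ψ = log (d + 1) := by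
  have h := congrArg log hΨ
  rw [log_mul (by linarith) (by positivity), log_rpow (by positivity), log_rpow hΨ₀] at h
  unfold psiLog
  linarith

lemma log_sub_div_le_psiLog {d t : ℝ} (hd : 0 ≤ d) (ht : 0 < t) :
    log t - d / t ≤ psiLog d t := by
  have h := log_sub_log_le_div_sub_one (by positivity : 0 < t + 1) ht
  have hfrac : (t + 1) / t - 1 = 1 / t := by field_simp; ring
  rw [hfrac] at h
  have := mul_le_mul_of_nonneg_left h hd
  unfold psiLog
  rw [div_eq_mul_one_div d t]
  linarith

lemma psiLog_sub_one_le {d t : ℝ} (hd : -1 ≤ d) (ht : 1 < t) :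
    psiLog d (t - 1) ≤ log t - (d + 1) / t := by
  have h := log_sub_log_le_div_sub_one (by linarith : 0 < t - 1) (by linarith : 0 < t)
  have hfrac : (t - 1) / t - 1 = -(1 / t) := by field_simp; ring
  rw [hfrac] at h
  have := mul_le_mul_of_nonneg_left h (by linarith : 0 ≤ d + 1)
  unfold psiLog
  rw [sub_add_cancel, div_eq_mul_one_div (d + 1) t]
  linarith

/-- `Ψ_d ∈ [d / W(d/(d+1)) - 1, d / W(d/(d+1))]`, where `W` is the Lambert-W function
on the nonnegative reals, encoded implicitly by `w * e^w = d/(d+1)`. -/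
theorem psi_lambertW_bounds (d : ℝ) (hd : 1 ≤ d) (Ψ : ℝ) (hΨpos : 0 < Ψ)
    (hΨ : (d + 1) * (Ψ + 1) ^ d = Ψ ^ (d + 1))
    (w : ℝ) (hw : 0 < w) (hweq : w * Real.exp w = d / (d + 1)) :
    d / w - 1 ≤ Ψ ∧ Ψ ≤ d / w := by
  have hd₀ : 0 < d := by linarith
  set t := d / w with ht_def
  have ht : t = (d + 1) * exp w := by
    rw [ht_def, div_eq_iff hw.ne', mul_assoc, mul_comm (exp w), hweq]
    field_simp
  have hlog_t : log t = log (d + 1) + w := by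
    rw [ht, log_mul (by positivity) (exp_pos w).ne', log_exp]
  have hd_div_t : d / t = w := div_div_cancel₀ hd₀.ne'
  have ht₁ : 1 < t := by
    rw [ht]
    nlinarith [add_one_lt_exp hw.ne']
  have hFΨ := psiLog_eq_log_of_rpow_eq (by linarith) hΨpos hΨ
  have hmono := strictMonoOn_psiLog hd₀.le
  constructor
  · have hF := psiLog_sub_one_le (d := d) (by linarith) ht₁
    rw [hlog_t, add_div, hd_div_t] at hF
    have hlt : psiLog d (t - 1) < psiLog d Ψ := by
      rw [hFΨ]
      linarith [one_div_pos.2 (zero_lt_one.trans ht₁)]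
    exact ((hmono.lt_iff_lt (show 0 < t - 1 by linarith) hΨpos).1 hlt).le
  · have hF := log_sub_div_le_psiLog hd₀.le (by linarith : 0 < t)
    rw [hlog_t, hd_div_t, add_sub_cancel_right, ← hFΨ] at hF
    exact (hmono.le_iff_le hΨpos (show 0 < t by linarith)).1 hF
end

section
/- For all real numbers d ≥ 2 and d_r ≥ 2, the equation d_r·((2 − 1/d)·x·e^{1/x} + x² − e^{2/x} − x²·e^{1/x}) = e^{2/x} has a unique solution x in the positive reals. -/
/-!
Write `u = e^{-1/x}` and `a = 2 - 1/d ∈ [3/2, 2)`. Dividing by `d_r e^{2/x}`, the equation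
becomes `G(x) = 1/d_r` with `G(x) = a x u + x² u² - x² u - 1` (this is `xiFun a x`). For `a ≥ 3/2`
`G` is strictly increasing on `(0, ∞)`: `G'(x) = u (a (1 + 1/x) - (2x + 1) + u (2x + 2))`, and with
`t = 1/x` positivity of the bracket reduces to `(2 + 2t) e^{-t} + 3t²/2 ≥ 2`, whose left side has
derivative `t (3 - 2e^{-t}) ≥ 0`. Since `G(1/2) < 0 ≤ 1/d_r ≤ 1/2 ≤ G(4)`, the intermediate value
theorem gives a solution and monotonicity makes it unique.
-/

open Real Set

lemma two_le_mul_exp_neg_add_sq {t : ℝ} (ht : 0 ≤ t) :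
    2 ≤ (2 + 2 * t) * exp (-t) + 3 / 2 * t ^ 2 := by
  let f : ℝ → ℝ := fun s => (2 + 2 * s) * exp (-s) + 3 / 2 * s ^ 2
  have hf : ∀ s, HasDerivAt f (s * (3 - 2 * exp (-s))) s := fun s => by
    have := ((((hasDerivAt_id s).const_mul 2).const_add 2).mul (hasDerivAt_neg s).exp).add
      ((hasDerivAt_pow 2 s).const_mul (3 / 2))
    refine this.congr_deriv ?_
    simp only [id, mul_one, Nat.cast_ofNat]
    ring
  have hmono : MonotoneOn f (Ici 0) := by
    refine monotoneOn_of_deriv_nonneg (convex_Ici 0)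
      (fun s _ => (hf s).continuousAt.continuousWithinAt)
      (fun s _ => (hf s).differentiableAt.differentiableWithinAt) fun s hs => ?_
    rw [interior_Ici] at hs
    rw [(hf s).deriv]
    have : exp (-s) ≤ 1 := exp_le_one_iff.mpr (by linarith [mem_Ioi.mp hs])
    nlinarith [mem_Ioi.mp hs]
  simpa [f] using hmono self_mem_Ici ht ht

noncomputable def xiFun (a x : ℝ) : ℝ :=
  a * x * exp (-(1 / x)) + x ^ 2 * exp (-(1 / x)) ^ 2 - x ^ 2 * exp (-(1 / x)) - 1

lemma mul_sub_eq_exp_iff_xiFun_eq {a r x : ℝ} (hr : r ≠ 0) :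
    r * (a * x * exp (1 / x) + x ^ 2 - exp (2 / x) - x ^ 2 * exp (1 / x)) = exp (2 / x) ↔
      xiFun a x = r⁻¹ := by
  have h2 : exp (2 / x) = exp (1 / x) ^ 2 := by rw [← exp_nat_mul]; ring_nf
  rw [xiFun, exp_neg, h2]
  have := exp_pos (1 / x)
  field_simp
  constructor <;> intro h <;> linear_combination h

lemma hasDerivAt_xiFun (a : ℝ) {x : ℝ} (hx : x ≠ 0) :
    HasDerivAt (xiFun a)
      (exp (-(1 / x)) * (a * (1 + 1 / x) - (2 * x + 1) + exp (-(1 / x)) * (2 * x + 2))) x := by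
  have hu : HasDerivAt (fun y => exp (-(1 / y))) (exp (-(1 / x)) * (1 / x ^ 2)) x := by
    simpa [one_div] using (hasDerivAt_inv hx).neg.exp
  have hsq := hasDerivAt_pow 2 x
  have := ((((hasDerivAt_id x).const_mul a).mul hu).add (hsq.mul (hu.pow 2))).sub
    (hsq.mul hu) |>.sub_const 1
  refine this.congr_deriv ?_
  simp only [id, Pi.pow_apply]
  field_simp
  ring

lemma deriv_xiFun_factor_pos {a x : ℝ} (ha : 3 / 2 ≤ a) (hx : 0 < x) :
    0 < a * (1 + 1 / x) - (2 * x + 1) + exp (-(1 / x)) * (2 * x + 2) := by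
  obtain ⟨t, ht, rfl⟩ : ∃ t, 0 < t ∧ x = 1 / t := ⟨1 / x, by positivity, by simp⟩
  have key := two_le_mul_exp_neg_add_sq ht.le
  rw [one_div_one_div]
  have e : t * (a * (1 + t) - (2 * (1 / t) + 1) + exp (-t) * (2 * (1 / t) + 2))
      = a * t * (1 + t) - 2 - t + (2 + 2 * t) * exp (-t) := by
    field_simp
    ring
  refine pos_of_mul_pos_right ?_ ht.le
  rw [e]
  nlinarith

lemma strictMonoOn_xiFun {a : ℝ} (ha : 3 / 2 ≤ a) : StrictMonoOn (xiFun a) (Ioi 0) := by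
  refine strictMonoOn_of_deriv_pos (convex_Ioi 0)
    (fun x hx => (hasDerivAt_xiFun a (ne_of_gt hx)).continuousAt.continuousWithinAt)
    fun x hx => ?_
  rw [interior_Ioi] at hx
  rw [(hasDerivAt_xiFun a (ne_of_gt hx)).deriv]
  exact mul_pos (exp_pos _) (deriv_xiFun_factor_pos ha hx)

lemma xiFun_one_half_neg {a : ℝ} (ha : a ≤ 2) : xiFun a (1 / 2) < 0 := by
  have hu : exp (-(1 / (1 / 2 : ℝ))) < 1 := exp_lt_one_iff.mpr (by norm_num)
  have := exp_pos (-(1 / (1 / 2 : ℝ)))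
  unfold xiFun
  nlinarith

lemma one_half_le_xiFun_four {a : ℝ} (ha : 3 / 2 ≤ a) : 1 / 2 ≤ xiFun a 4 := by
  have hu : 3 / 4 ≤ exp (-(1 / (4 : ℝ))) := by linarith [add_one_le_exp (-(1 / (4 : ℝ)))]
  unfold xiFun
  nlinarith

lemma existsUnique_xiFun_eq {a c : ℝ} (ha₁ : 3 / 2 ≤ a) (ha₂ : a ≤ 2) (hc₀ : 0 ≤ c)
    (hc : c ≤ 1 / 2) : ∃! x, 0 < x ∧ xiFun a x = c := by
  have hcont : ContinuousOn (xiFun a) (Icc (1 / 2) 4) := fun x hx =>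
    (hasDerivAt_xiFun a (by linarith [hx.1])).continuousAt.continuousWithinAt
  obtain ⟨x, hx, hxc⟩ := intermediate_value_Icc (by norm_num) hcont
    ⟨(xiFun_one_half_neg ha₂).le.trans hc₀, hc.trans (one_half_le_xiFun_four ha₁)⟩
  have hx₀ : 0 < x := by linarith [hx.1]
  exact ⟨x, ⟨hx₀, hxc⟩, fun y ⟨hy₀, hyc⟩ =>
    (strictMonoOn_xiFun ha₁).injOn hy₀ hx₀ (hyc.trans hxc.symm)⟩

/-- For all reals `d ≥ 2` and `d_r ≥ 2`, the equation defining `Ξ_{d_r}` has a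
unique positive real solution. -/
theorem xi_exists_unique (d dr : ℝ) (hd : 2 ≤ d) (hdr : 2 ≤ dr) :
    ∃! x : ℝ, 0 < x ∧
      dr * ((2 - 1 / d) * x * Real.exp (1 / x) + x ^ 2 - Real.exp (2 / x)
        - x ^ 2 * Real.exp (1 / x)) = Real.exp (2 / x) := by
  have hd' : 1 / d ≤ 1 / 2 := one_div_le_one_div_of_le two_pos hd
  have hd₀ : 0 < 1 / d := by positivity
  simp_rw [mul_sub_eq_exp_iff_xiFun_eq (by positivity : dr ≠ 0)]
  exact existsUnique_xiFun_eq (by linarith) (by linarith) (by positivity)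
    (by rw [one_div]; exact inv_anti₀ two_pos hdr)
end

section
/- Let d ≥ 2 be a real number and let Ξ > 0 satisfy d·(2Ξ·e^{1/Ξ} + Ξ² − e^{2/Ξ} − Ξ²·e^{1/Ξ}) = e^{2/Ξ}. Let w > 0 satisfy w·e^w = 1.27. Then 1/w + 1/d ≤ Ξ. -/
lemma pow_lin {s b : ℝ} (h0 : 0 ≤ s) (h1 : s ≤ b) (k : ℕ) : s^(k+1) ≤ b^k * s := by
  calc s^(k+1) = s^k * s := pow_succ s k
  _ ≤ b^k * s := mul_le_mul_of_nonneg_right (pow_le_pow_left₀ h0 h1 k) h0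

theorem expNeg_bounds {t : ℝ} (h0 : 0 ≤ t) (h1 : t ≤ 1) :
    1 - t + t^2/2 - t^3/6 + t^4/24 - t^5/120 + t^6/720 - t^7/4410 ≤ Real.exp (-t) ∧
    Real.exp (-t) ≤ 1 - t + t^2/2 - t^3/6 + t^4/24 - t^5/120 + t^6/720 + t^7/4410 := by
  have habs : |(-t)| ≤ 1 := by rw [abs_neg, abs_of_nonneg h0]; exact h1
  have hb := Real.exp_bound habs (n := 7) (by norm_num)
  have hsum : ∑ m ∈ Finset.range 7, (-t) ^ m / (m.factorial : ℝ)
      = 1 - t + t^2/2 - t^3/6 + t^4/24 - t^5/120 + t^6/720 := by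
    simp [Finset.sum_range_succ, Nat.factorial]
    ring
  have habs7 : |(-t)| ^ 7 * ((7:ℕ).succ / ((7:ℕ).factorial * (7:ℕ)) : ℝ) = t^7/4410 := by
    rw [abs_neg, abs_of_nonneg h0]
    norm_num [Nat.factorial]
    ring
  rw [hsum, habs7] at hb
  have h := abs_le.mp hb
  constructor <;> linarith [h.1, h.2]

theorem pI1 (t : ℝ) (h1 : 25/38 ≤ t) (h2 : t ≤ 7/10) :
    (1 - t + t^2/2 - t^3/6 + t^4/24 - t^5/120 + t^6/720 + t^7/4410)^2 + (2*t-1)*(1 - t + t^2/2 - t^3/6 + t^4/24 - t^5/120 + t^6/720 + t^7/4410) - t^2 ≤ 0 := by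
  have h0 : (0:ℝ) ≤ t - (25/38) := by linarith
  have hw : t - (25/38) ≤ (7/10) - (25/38) := by linarith
  nlinarith [pow_lin h0 hw 1,
    pow_lin h0 hw 2,
    pow_lin h0 hw 3,
    pow_lin h0 hw 4,
    pow_lin h0 hw 5,
    pow_lin h0 hw 6,
    pow_lin h0 hw 7,
    pow_lin h0 hw 8,
    pow_lin h0 hw 9,
    pow_lin h0 hw 10,
    pow_lin h0 hw 11,
    pow_lin h0 hw 12,
    pow_lin h0 hw 13,
    pow_nonneg h0 2,
    pow_nonneg h0 3,
    pow_nonneg h0 4,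
    pow_nonneg h0 5,
    pow_nonneg h0 6,
    pow_nonneg h0 7,
    pow_nonneg h0 8,
    pow_nonneg h0 9,
    pow_nonneg h0 10,
    pow_nonneg h0 11,
    pow_nonneg h0 12,
    pow_nonneg h0 13,
    pow_nonneg h0 14]

theorem pI2 (t : ℝ) (h1 : 7/10 ≤ t) (h2 : t ≤ 3/4) :
    (1 - t + t^2/2 - t^3/6 + t^4/24 - t^5/120 + t^6/720 + t^7/4410)^2 + (2*t-1)*(1 - t + t^2/2 - t^3/6 + t^4/24 - t^5/120 + t^6/720 + t^7/4410) - t^2 ≤ 0 := by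
  have h0 : (0:ℝ) ≤ t - (7/10) := by linarith
  have hw : t - (7/10) ≤ (3/4) - (7/10) := by linarith
  nlinarith [pow_lin h0 hw 1,
    pow_lin h0 hw 2,
    pow_lin h0 hw 3,
    pow_lin h0 hw 4,
    pow_lin h0 hw 5,
    pow_lin h0 hw 6,
    pow_lin h0 hw 7,
    pow_lin h0 hw 8,
    pow_lin h0 hw 9,
    pow_lin h0 hw 10,
    pow_lin h0 hw 11,
    pow_lin h0 hw 12,
    pow_lin h0 hw 13,
    pow_nonneg h0 2,
    pow_nonneg h0 3,
    pow_nonneg h0 4,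
    pow_nonneg h0 5,
    pow_nonneg h0 6,
    pow_nonneg h0 7,
    pow_nonneg h0 8,
    pow_nonneg h0 9,
    pow_nonneg h0 10,
    pow_nonneg h0 11,
    pow_nonneg h0 12,
    pow_nonneg h0 13,
    pow_nonneg h0 14]

theorem pI3 (t : ℝ) (h1 : 3/4 ≤ t) (h2 : t ≤ 17/20) :
    (1 - t + t^2/2 - t^3/6 + t^4/24 - t^5/120 + t^6/720 + t^7/4410)^2 + (2*t-1)*(1 - t + t^2/2 - t^3/6 + t^4/24 - t^5/120 + t^6/720 + t^7/4410) - t^2 ≤ 0 := by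
  have h0 : (0:ℝ) ≤ t - (3/4) := by linarith
  have hw : t - (3/4) ≤ (17/20) - (3/4) := by linarith
  nlinarith [pow_lin h0 hw 1,
    pow_lin h0 hw 2,
    pow_lin h0 hw 3,
    pow_lin h0 hw 4,
    pow_lin h0 hw 5,
    pow_lin h0 hw 6,
    pow_lin h0 hw 7,
    pow_lin h0 hw 8,
    pow_lin h0 hw 9,
    pow_lin h0 hw 10,
    pow_lin h0 hw 11,
    pow_lin h0 hw 12,
    pow_lin h0 hw 13,
    pow_nonneg h0 2,
    pow_nonneg h0 3,
    pow_nonneg h0 4,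
    pow_nonneg h0 5,
    pow_nonneg h0 6,
    pow_nonneg h0 7,
    pow_nonneg h0 8,
    pow_nonneg h0 9,
    pow_nonneg h0 10,
    pow_nonneg h0 11,
    pow_nonneg h0 12,
    pow_nonneg h0 13,
    pow_nonneg h0 14]

theorem pI4 (t : ℝ) (h1 : 17/20 ≤ t) (h2 : t ≤ 1) :
    (1 - t + t^2/2 - t^3/6 + t^4/24 - t^5/120 + t^6/720 + t^7/4410)^2 + (2*t-1)*(1 - t + t^2/2 - t^3/6 + t^4/24 - t^5/120 + t^6/720 + t^7/4410) - t^2 ≤ 0 := by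
  have h0 : (0:ℝ) ≤ t - (17/20) := by linarith
  have hw : t - (17/20) ≤ (1) - (17/20) := by linarith
  nlinarith [pow_lin h0 hw 1,
    pow_lin h0 hw 2,
    pow_lin h0 hw 3,
    pow_lin h0 hw 4,
    pow_lin h0 hw 5,
    pow_lin h0 hw 6,
    pow_lin h0 hw 7,
    pow_lin h0 hw 8,
    pow_lin h0 hw 9,
    pow_lin h0 hw 10,
    pow_lin h0 hw 11,
    pow_lin h0 hw 12,
    pow_lin h0 hw 13,
    pow_nonneg h0 2,
    pow_nonneg h0 3,
    pow_nonneg h0 4,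
    pow_nonneg h0 5,
    pow_nonneg h0 6,
    pow_nonneg h0 7,
    pow_nonneg h0 8,
    pow_nonneg h0 9,
    pow_nonneg h0 10,
    pow_nonneg h0 11,
    pow_nonneg h0 12,
    pow_nonneg h0 13,
    pow_nonneg h0 14]

theorem pII0 (t : ℝ) (h1 : 1/2 ≤ t) (h2 : t ≤ 25/38) :
    (1 - t + t^2/2 - t^3/6 + t^4/24 - t^5/120 + t^6/720 + t^7/4410)^2 + (2*t-1)*(1 - t + t^2/2 - t^3/6 + t^4/24 - t^5/120 + t^6/720 + t^7/4410) - t + (1303/2500)*t^2 ≤ 0 := by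
  have h0 : (0:ℝ) ≤ t - (1/2) := by linarith
  have hw : t - (1/2) ≤ (25/38) - (1/2) := by linarith
  nlinarith [pow_lin h0 hw 1,
    pow_lin h0 hw 2,
    pow_lin h0 hw 3,
    pow_lin h0 hw 4,
    pow_lin h0 hw 5,
    pow_lin h0 hw 6,
    pow_lin h0 hw 7,
    pow_lin h0 hw 8,
    pow_lin h0 hw 9,
    pow_lin h0 hw 10,
    pow_lin h0 hw 11,
    pow_lin h0 hw 12,
    pow_lin h0 hw 13,
    pow_nonneg h0 2,
    pow_nonneg h0 3,
    pow_nonneg h0 4,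
    pow_nonneg h0 5,
    pow_nonneg h0 6,
    pow_nonneg h0 7,
    pow_nonneg h0 8,
    pow_nonneg h0 9,
    pow_nonneg h0 10,
    pow_nonneg h0 11,
    pow_nonneg h0 12,
    pow_nonneg h0 13,
    pow_nonneg h0 14]

theorem pIII0 (t : ℝ) (h1 : 4947/10000 ≤ t) (h2 : t ≤ 1/2) :
    (1 - t + t^2/2 - t^3/6 + t^4/24 - t^5/120 + t^6/720 + t^7/4410)^2 + (2*t-1)*(1 - t + t^2/2 - t^3/6 + t^4/24 - t^5/120 + t^6/720 - t^7/4410) - t + (1303/2500)*t^2 ≤ 0 := by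
  have h0 : (0:ℝ) ≤ t - (4947/10000) := by linarith
  have hw : t - (4947/10000) ≤ (1/2) - (4947/10000) := by linarith
  nlinarith [pow_lin h0 hw 1,
    pow_lin h0 hw 2,
    pow_lin h0 hw 3,
    pow_lin h0 hw 4,
    pow_lin h0 hw 5,
    pow_lin h0 hw 6,
    pow_lin h0 hw 7,
    pow_lin h0 hw 8,
    pow_lin h0 hw 9,
    pow_lin h0 hw 10,
    pow_lin h0 hw 11,
    pow_lin h0 hw 12,
    pow_lin h0 hw 13,
    pow_nonneg h0 2,
    pow_nonneg h0 3,
    pow_nonneg h0 4,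
    pow_nonneg h0 5,
    pow_nonneg h0 6,
    pow_nonneg h0 7,
    pow_nonneg h0 8,
    pow_nonneg h0 9,
    pow_nonneg h0 10,
    pow_nonneg h0 11,
    pow_nonneg h0 12,
    pow_nonneg h0 13,
    pow_nonneg h0 14]

lemma qstepA (t y U R : ℝ) (hy0 : 0 ≤ y) (hyU : y ≤ U)
    (hq : U^2 + (2*t-1)*U ≤ R) (h2t : 0 ≤ 2*t - 1) :
    (2*t-1)*y + y^2 ≤ R := by
  have hUy : 0 ≤ U - y := by linarith
  nlinarith [mul_nonneg hUy h2t, mul_nonneg hUy (by linarith : 0 ≤ U + y)]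

lemma qstepB (t y U L R : ℝ) (hy0 : 0 ≤ y) (hyU : y ≤ U) (hyL : L ≤ y)
    (hq : U^2 + (2*t-1)*L ≤ R) (h2t : 2*t - 1 ≤ 0) :
    (2*t-1)*y + y^2 ≤ R := by
  have hUy : 0 ≤ U - y := by linarith
  have hyL' : 0 ≤ y - L := by linarith
  nlinarith [mul_nonneg hyL' (by linarith : 0 ≤ 1 - 2*t),
    mul_nonneg hUy (by linarith : 0 ≤ U + y)]

theorem coreI (t y : ℝ) (ht1 : 25/38 ≤ t) (ht2 : t ≤ 1) (hy0 : 0 ≤ y)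
    (hyU : y ≤ 1 - t + t^2/2 - t^3/6 + t^4/24 - t^5/120 + t^6/720 + t^7/4410) :
    (2*t-1)*y + y^2 ≤ t^2 := by
  refine qstepA t y _ _ hy0 hyU ?_ (by linarith)
  have hq : (1 - t + t^2/2 - t^3/6 + t^4/24 - t^5/120 + t^6/720 + t^7/4410)^2
      + (2*t-1)*(1 - t + t^2/2 - t^3/6 + t^4/24 - t^5/120 + t^6/720 + t^7/4410) - t^2 ≤ 0 := by
    rcases le_total t (7/10) with h | h
    · exact pI1 t ht1 h
    · rcases le_total t (3/4) with h' | h'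
      · exact pI2 t h h'
      · rcases le_total t (17/20) with h'' | h''
        · exact pI3 t h' h''
        · exact pI4 t h'' ht2
  linarith

theorem coreII (t y : ℝ) (ht1 : 1/2 ≤ t) (ht2 : t ≤ 25/38) (hy0 : 0 ≤ y)
    (hyU : y ≤ 1 - t + t^2/2 - t^3/6 + t^4/24 - t^5/120 + t^6/720 + t^7/4410) :
    (2*t-1)*y + y^2 ≤ t - (1303/2500)*t^2 := by
  refine qstepA t y _ _ hy0 hyU ?_ (by linarith)
  linarith [pII0 t ht1 ht2]

theorem coreIII (t y : ℝ) (ht1 : 4947/10000 ≤ t) (ht2 : t ≤ 1/2) (hy0 : 0 ≤ y)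
    (hyU : y ≤ 1 - t + t^2/2 - t^3/6 + t^4/24 - t^5/120 + t^6/720 + t^7/4410)
    (hyL : 1 - t + t^2/2 - t^3/6 + t^4/24 - t^5/120 + t^6/720 - t^7/4410 ≤ y) :
    (2*t-1)*y + y^2 ≤ t - (1303/2500)*t^2 := by
  refine qstepB t y _ _ _ hy0 hyU hyL ?_ (by linarith)
  linarith [pIII0 t ht1 ht2]

theorem w_lb (w : ℝ) (hw : 0 < w) (hweq : w * Real.exp w = 1.27) : 6574/10000 ≤ w := by
  by_contra h
  push_neg at h
  have hub : Real.exp (6574/10000 : ℝ) ≤ 19315/10000 := by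
    have habs : |(6574/10000 : ℝ)| ≤ 1 := by rw [abs_of_nonneg (by norm_num)]; norm_num
    have hb := Real.exp_bound habs (n := 7) (by norm_num)
    have h' := (abs_le.mp hb).2
    have hsum : ∑ m ∈ Finset.range 7, ((6574/10000 : ℝ)) ^ m / (m.factorial : ℝ)
        + |(6574/10000 : ℝ)| ^ 7 * ((7:ℕ).succ / ((7:ℕ).factorial * (7:ℕ)) : ℝ)
        ≤ 19315/10000 := by
      rw [abs_of_nonneg (by norm_num : (0:ℝ) ≤ 6574/10000)]
      simp [Finset.sum_range_succ, Nat.factorial]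
      norm_num
    linarith
  have hlt : w * Real.exp w < (6574/10000) * Real.exp (6574/10000 : ℝ) := by
    have he : Real.exp w < Real.exp (6574/10000 : ℝ) := Real.exp_lt_exp.2 h
    nlinarith [Real.exp_pos w]
  rw [hweq] at hlt
  nlinarith [hlt, hub]

/-- `1/W(1.27) + 1/d ≤ Ξ_d` for all `d ≥ 2`, where `W(1.27)` is encoded implicitly as
the unique `w > 0` with `w e^w = 1.27`. -/
theorem xi_lower_bound_case2 (d : ℝ) (hd : 2 ≤ d) (Ξ : ℝ) (hΞpos : 0 < Ξ)
    (hΞ : d * (2 * Ξ * Real.exp (1 / Ξ) + Ξ ^ 2 - Real.exp (2 / Ξ)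
        - Ξ ^ 2 * Real.exp (1 / Ξ)) = Real.exp (2 / Ξ))
    (w : ℝ) (hw : 0 < w) (hweq : w * Real.exp w = 1.27) :
    1 / w + 1 / d ≤ Ξ := by
  by_contra hcon
  push_neg at hcon
  have hd0 : (0:ℝ) < d := by linarith
  have hdinv : (0:ℝ) < 1/d := by positivity
  have hd2 : 1/d ≤ 1/2 := by rw [div_le_div_iff₀ hd0 (by norm_num)]; linarith
  have hwl : (6574/10000 : ℝ) ≤ w := w_lb w hw hweq
  have hwi : 1/w ≤ 10000/6574 := by rw [div_le_div_iff₀ hw (by norm_num)]; linarith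
  have hxlt : Ξ < 10000/6574 + 1/2 := by linarith
  set a := Real.exp (1/Ξ) with hadef
  have ha : (0:ℝ) < a := Real.exp_pos _
  have ha2 : Real.exp (2/Ξ) = a^2 := by
    have h2 : (2:ℝ)/Ξ = 1/Ξ + 1/Ξ := by ring
    rw [h2, Real.exp_add, hadef, sq]
  set y := Real.exp (-(1/Ξ)) with hydef
  have hy0 : (0:ℝ) < y := Real.exp_pos _
  have hya : y * a = 1 := by
    rw [hydef, hadef, ← Real.exp_add]
    simp
  -- KEY inequality
  have KEY : (2-Ξ)*Ξ*y + Ξ^2*y^2 < 1 + 1/d := by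
    rcases le_or_gt Ξ 1 with hx1 | hx1
    · -- Ξ ≤ 1
      have h1x : (1:ℝ) ≤ 1/Ξ := one_le_one_div hΞpos hx1
      have hyb : y ≤ 368/1000 := by
        have h1 : Real.exp (-(1/Ξ)) ≤ Real.exp (-1) := Real.exp_le_exp.2 (by linarith)
        have h2 : Real.exp (-1 : ℝ) ≤ 368/1000 := by
          rw [Real.exp_neg]
          have := Real.exp_one_gt_d9
          rw [inv_le_comm₀ (by positivity) (by norm_num)]
          linarith
        rw [hydef]; linarith
      have hxy : Ξ*y ≤ 368/1000 := by nlinarith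
      nlinarith [mul_pos hΞpos hy0, sq_nonneg (Ξ*y)]
    · -- 1 < Ξ
      set t := 1/Ξ with htdef
      have ht0 : (0:ℝ) < t := by positivity
      have ht1 : t ≤ 1 := by rw [htdef, div_le_one hΞpos]; linarith
      have hxt : Ξ * t = 1 := by rw [htdef]; field_simp
      have hB := expNeg_bounds ht0.le ht1
      have hyU : y ≤ 1 - t + t^2/2 - t^3/6 + t^4/24 - t^5/120 + t^6/720 + t^7/4410 := by
        rw [hydef]; exact hB.2
      have hyL : 1 - t + t^2/2 - t^3/6 + t^4/24 - t^5/120 + t^6/720 - t^7/4410 ≤ y := by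
        rw [hydef]; exact hB.1
      have htlow : 4947/10000 ≤ t := by
        rw [htdef, le_div_iff₀ hΞpos]; linarith
      have hphi : (2-Ξ)*Ξ*y + Ξ^2*y^2 = Ξ^2*((2*t-1)*y + y^2) := by
        linear_combination (-(2*Ξ*y)) * hxt
      rcases le_or_gt Ξ (38/25) with hx152 | hx152
      · have ht2538 : 25/38 ≤ t := by rw [htdef, le_div_iff₀ hΞpos]; linarith
        have hcore := coreI t y ht2538 ht1 hy0.le hyU
        have h2 : Ξ^2*((2*t-1)*y + y^2) ≤ Ξ^2*t^2 :=
          mul_le_mul_of_nonneg_left hcore (sq_nonneg Ξ)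
        have h3 : Ξ^2*t^2 = 1 := by
          calc Ξ^2*t^2 = (Ξ*t)^2 := by ring
          _ = 1 := by rw [hxt]; norm_num
        rw [hphi]; linarith
      · have hres : (2*t-1)*y + y^2 ≤ t - (1303/2500)*t^2 := by
          rcases le_or_gt Ξ 2 with hx2 | hx2
          · have ht12 : 1/2 ≤ t := by rw [htdef, le_div_iff₀ hΞpos]; linarith
            have ht2538' : t ≤ 25/38 := by
              rw [htdef, div_le_iff₀ hΞpos]; linarith
            exact coreII t y ht12 ht2538' hy0.le hyU
          · have ht12' : t ≤ 1/2 := by rw [htdef, div_le_iff₀ hΞpos]; linarith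
            exact coreIII t y htlow ht12' hy0.le hyU hyL
        have h2 : Ξ^2*((2*t-1)*y + y^2) ≤ Ξ^2*(t - (1303/2500)*t^2) :=
          mul_le_mul_of_nonneg_left hres (sq_nonneg Ξ)
        have h3 : Ξ^2*(t - (1303/2500)*t^2) = Ξ - 1303/2500 := by
          calc Ξ^2*(t - (1303/2500)*t^2) = (Ξ*t)*Ξ - (1303/2500)*(Ξ*t)^2 := by ring
          _ = Ξ - 1303/2500 := by rw [hxt]; ring
        rw [hphi]
        -- Ξ - 1303/2500 < 1/w + 1/d - 1303/2500 ≤ 1 + 1/d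
        linarith
  -- derive contradiction
  have hP : d*((2-Ξ)*Ξ*a + Ξ^2) = (1+d)*a^2 := by
    rw [ha2] at hΞ
    linear_combination hΞ
  have hQ : d*((2-Ξ)*Ξ*a + Ξ^2) < (1+d)*a^2 := by
    have h := mul_lt_mul_of_pos_right KEY (show (0:ℝ) < d*a^2 by positivity)
    calc d*((2-Ξ)*Ξ*a + Ξ^2)
        = ((2-Ξ)*Ξ*y + Ξ^2*y^2) * (d*a^2) := by
          linear_combination (-(d*(2-Ξ)*Ξ*a) - d*Ξ^2*(y*a+1)) * hya
      _ < (1 + 1/d)*(d*a^2) := h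
      _ = (1+d)*a^2 := by field_simp; ring
  exact absurd hP (ne_of_lt hQ)
end

section
/- For all real numbers d_r ≥ 2 and c ≥ 1: (d_r+2)·e^{−1/c} − d_r·e^{−(d_r+2)/(c·d_r − 1)} < 2. -/
/-!
Writing the second exponent as `1/c + u` with `u = (2c+1)/(c(cd-1))`, the claim becomes
`d (1 - e^{-u}) < 2 (e^{1/c} - 1)`. The Padé bound `1 - e^{-u} ≤ 2u/(2+u)` turns the left side
into `2d(2c+1)/(2c²d+1)`, which is less than `(2c+1)/c² = 2/c + 1/c²`, and this is at most
`2(e^{1/c} - 1)` by the quadratic Taylor bound for `exp`.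
-/

open Real

theorem Real.one_sub_exp_neg_le_two_mul_div {u : ℝ} (hu : 0 ≤ u) :
    1 - exp (-u) ≤ 2 * u / (2 + u) := by
  rcases lt_or_ge u 2 with h2 | h2
  · calc 1 - exp (-u) ≤ 1 - (2 - u) / (2 + u) := by
          gcongr
          rw [exp_neg, ← inv_div]
          exact inv_anti₀ (by positivity) (exp_le_two_add_div_two_sub hu h2)
      _ = 2 * u / (2 + u) := by field_simp; ring
  · rw [le_div_iff₀ (by positivity)]
    nlinarith [exp_pos (-u)]

theorem add_two_mul_exp_neg_one_div_sub_mul_exp_neg_lt_two {c d : ℝ} (hc : 0 < c) (hcd : 1 < c * d) :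
    (d + 2) * exp (-(1 / c)) - d * exp (-((d + 2) / (c * d - 1))) < 2 := by
  have hd : 0 < d := pos_of_mul_pos_right (one_pos.trans hcd) hc.le
  have hs : d * c - 1 ≠ 0 := (by linarith : 0 < d * c - 1).ne'
  set u := (2 * c + 1) / (c * (c * d - 1)) with hu_def
  have hu : 0 ≤ u := div_nonneg (by positivity) (mul_nonneg hc.le (sub_pos.2 hcd).le)
  have hsplit : (d + 2) / (c * d - 1) = 1 / c + u := by
    rw [hu_def]; field_simp; ring
  have hkey : d * (1 - exp (-u)) < 2 * (exp (1 / c) - 1) := calc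
    d * (1 - exp (-u)) ≤ d * (2 * u / (2 + u)) :=
      mul_le_mul_of_nonneg_left (one_sub_exp_neg_le_two_mul_div hu) hd.le
    _ = 2 * d * (2 * c + 1) / (2 * c ^ 2 * d + 1) := by
      have h2u : 2 + u ≠ 0 := by positivity
      have hden : 2 * c ^ 2 * d + 1 ≠ 0 := by positivity
      rw [mul_div_assoc', div_eq_div_iff h2u hden, hu_def]
      field_simp
      ring
    _ < (2 * c + 1) / c ^ 2 := by rw [div_lt_div_iff₀ (by positivity) (by positivity)]; nlinarith
    _ = 2 * (1 / c) + (1 / c) ^ 2 := by field_simp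
    _ ≤ 2 * (exp (1 / c) - 1) := by linarith [quadratic_le_exp_of_nonneg (one_div_pos.2 hc).le]
  have hinv : exp (-(1 / c)) * exp (1 / c) = 1 := by rw [← exp_add]; simp
  rw [hsplit, neg_add, exp_add]
  nlinarith [mul_lt_mul_of_pos_left hkey (exp_pos (-(1 / c)))]

/-- For all reals `d_r ≥ 2` and `c ≥ 1`:
`(d_r+2) e^{-1/c} - d_r e^{-(d_r+2)/(c d_r - 1)} < 2`. -/
theorem case3_term_smaller_two (dr c : ℝ) (hdr : 2 ≤ dr) (hc : 1 ≤ c) :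
    (dr + 2) * Real.exp (-(1 / c)) - dr * Real.exp (-((dr + 2) / (c * dr - 1))) < 2 :=
  add_two_mul_exp_neg_one_div_sub_mul_exp_neg_lt_two (by linarith) (by nlinarith)
end

section
/- Let d ≥ d_r ≥ 2 be real numbers and let w > 0 satisfy w·e^w = 1.27. Then the function c ↦ (d_r+1)·e^{1/c} − (2 − 1/d)·c·d_r + c²·d_r·(1 − e^{−1/c}) is strictly decreasing on the interval [1/w, ∞); that is, for all c₂ > c₁ ≥ 1/w, the value at c₂ is strictly less than the value at c₁. -/
/-!
Writing `t = 1/c`, the derivative of the term is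
`-(d_r+1) t² e^t - (2 - 1/d) d_r + d_r (2c(1 - e^{-t}) - e^{-t})`.
Since `1 - e^{-t} ≤ t = 1/c`, this is below `d_r (1/d - e^{-t} - t² e^t) - t² e^t`, and
`e^{-t} + t² e^t ≥ 1 - t + t² ≥ 3/4 > 1/2 ≥ 1/d`. So the term decreases on all of `(0, ∞)`.
-/

open Real Set

noncomputable def case3Term (d dr c : ℝ) : ℝ :=
  (dr + 1) * exp (1 / c) - (2 - 1 / d) * c * dr + c ^ 2 * dr * (1 - exp (-(1 / c)))

noncomputable def case3TermDeriv (d dr c : ℝ) : ℝ :=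
  -(dr + 1) * exp (1 / c) / c ^ 2 - (2 - 1 / d) * dr
    + dr * (2 * c * (1 - exp (-(1 / c))) - exp (-(1 / c)))

theorem hasDerivAt_case3Term (d dr : ℝ) {c : ℝ} (hc : c ≠ 0) :
    HasDerivAt (case3Term d dr) (case3TermDeriv d dr c) c := by
  have hinv : HasDerivAt (fun x : ℝ => 1 / x) (-(1 / c ^ 2)) c := by
    simpa [one_div] using hasDerivAt_inv hc
  have hexp := (hinv.exp.const_mul (dr + 1)).sub
    (((hasDerivAt_id c).const_mul (2 - 1 / d)).mul_const dr)
  have hsq : HasDerivAt (fun x : ℝ => x ^ 2 * dr) (2 * c * dr) c := by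
    simpa using (hasDerivAt_pow 2 c).mul_const dr
  refine (hexp.add (hsq.mul (hinv.neg.exp.const_sub 1))).congr_deriv ?_
  have hc2 : c ^ 2 * (1 / c ^ 2) = 1 := by field_simp
  unfold case3TermDeriv
  linear_combination (-(dr * exp (-(1 / c)))) * hc2

theorem three_quarters_le_exp_neg_add_sq_mul_exp {t : ℝ} (ht : 0 ≤ t) :
    3 / 4 ≤ exp (-t) + t ^ 2 * exp t := by
  have hneg : 1 - t ≤ exp (-t) := by linarith [add_one_le_exp (-t)]
  have hpos : t ^ 2 ≤ t ^ 2 * exp t :=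
    le_mul_of_one_le_right (sq_nonneg t) (one_le_exp ht)
  nlinarith [sq_nonneg (t - 1 / 2)]

theorem case3TermDeriv_neg {d dr c : ℝ} (hd : 2 ≤ d) (hdr : 0 ≤ dr) (hc : 0 < c) :
    case3TermDeriv d dr c < 0 := by
  unfold case3TermDeriv
  set t := 1 / c with ht
  have hct : c * t = 1 := mul_one_div_cancel hc.ne'
  have hsq : 1 / c ^ 2 = t ^ 2 := by rw [ht, one_div_pow]
  have hbracket : c * (1 - exp (-t)) ≤ 1 := by
    rw [← hct]
    exact mul_le_mul_of_nonneg_left (by linarith [add_one_le_exp (-t)]) hc.le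
  have hd_inv : 1 / d ≤ 1 / 2 := one_div_le_one_div_of_le two_pos hd
  have hquarter := three_quarters_le_exp_neg_add_sq_mul_exp (t := t) (by positivity)
  have hsq_exp_pos : 0 < t ^ 2 * exp t := by positivity
  have hrw : -(dr + 1) * exp t / c ^ 2 = -(dr + 1) * (t ^ 2 * exp t) := by
    rw [div_eq_mul_one_div, hsq]; ring
  rw [hrw]
  nlinarith [mul_le_mul_of_nonneg_left hbracket hdr, mul_le_mul_of_nonneg_left hd_inv hdr,
    mul_le_mul_of_nonneg_left hquarter hdr]

theorem strictAntiOn_case3Term {d dr : ℝ} (hd : 2 ≤ d) (hdr : 0 ≤ dr) :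
    StrictAntiOn (case3Term d dr) (Ioi 0) := by
  have hderiv (c : ℝ) (hc : c ∈ Ioi 0) := hasDerivAt_case3Term d dr (ne_of_gt hc)
  refine strictAntiOn_of_hasDerivWithinAt_neg (f' := case3TermDeriv d dr) (convex_Ioi 0)
    (fun c hc => (hderiv c hc).continuousAt.continuousWithinAt) ?_ ?_ <;>
    rw [interior_Ioi]
  · exact fun c hc => (hderiv c hc).hasDerivWithinAt
  · exact fun c hc => case3TermDeriv_neg hd hdr hc

theorem case3_term_decreasing_general (d dr : ℝ) (hdr : 2 ≤ dr) (hd : dr ≤ d)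
    (w : ℝ) (hw : 0 < w) :
    ∀ c₁ c₂ : ℝ, 1 / w ≤ c₁ → c₁ < c₂ →
      (dr + 1) * Real.exp (1 / c₂) - (2 - 1 / d) * c₂ * dr
          + c₂ ^ 2 * dr * (1 - Real.exp (-(1 / c₂)))
        < (dr + 1) * Real.exp (1 / c₁) - (2 - 1 / d) * c₁ * dr
          + c₁ ^ 2 * dr * (1 - Real.exp (-(1 / c₁))) := by
  intro c₁ c₂ hc₁ hlt
  have hpos₁ : 0 < c₁ := (one_div_pos.mpr hw).trans_le hc₁
  exact strictAntiOn_case3Term (hdr.trans hd) (by linarith) hpos₁ (hpos₁.trans hlt) hlt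

/-- The term `(d_r+1) e^{1/c} - (2 - 1/d) c d_r + c² d_r (1 - e^{-1/c})` is strictly
decreasing in `c` on `[1/W(1.27), ∞)`. -/
theorem case3_term_decreasing (d dr : ℝ) (hdr : 2 ≤ dr) (hd : dr ≤ d)
    (w : ℝ) (hw : 0 < w) (hweq : w * Real.exp w = 1.27) :
    ∀ c₁ c₂ : ℝ, 1 / w ≤ c₁ → c₁ < c₂ →
      (dr + 1) * Real.exp (1 / c₂) - (2 - 1 / d) * c₂ * dr
          + c₂ ^ 2 * dr * (1 - Real.exp (-(1 / c₂)))
        < (dr + 1) * Real.exp (1 / c₁) - (2 - 1 / d) * c₁ * dr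
          + c₁ ^ 2 * dr * (1 - Real.exp (-(1 / c₁))) :=
  case3_term_decreasing_general d dr hdr hd w hw
end

section
/- Let 2 ≤ d₁ ≤ d₂ be real numbers, and for i = 1, 2 let Ξᵢ ∈ [3/2, 2] satisfy dᵢ·(2Ξᵢ·e^{1/Ξᵢ} + Ξᵢ² − e^{2/Ξᵢ} − Ξᵢ²·e^{1/Ξᵢ}) = e^{2/Ξᵢ}. Then Ξ₂ ≤ Ξ₁; i.e., Ξ_d is decreasing in d. -/
/-!
Multiplying the defining equation by `e^{-2/x}` turns it into `d · h(x) = 1`, where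
`h(x) = 2xu + x²u² - 1 - x²u` with `u = e^{-1/x}`. Since `u' = u / x²`,
`h'(x) = u (1 + 2/x - 2x + (2x + 2) u)`, and for `(log 2)⁻¹ ≤ x ≤ 2` we have `u ≥ 1/2`, hence
`h'(x) ≥ u (2 + 2/x - x) > 0`. So `h` is strictly increasing on `[3/2, 2]`, and `h(Ξ_d) = 1/d`
decreases with `d`.
-/

open Real Set

noncomputable def xiH (x : ℝ) : ℝ :=
  2 * x * exp (-x⁻¹) + (x * exp (-x⁻¹)) ^ 2 - 1 - x ^ 2 * exp (-x⁻¹)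

theorem mul_xiH_eq_one_iff (d x : ℝ) :
    d * (2 * x * exp (1 / x) + x ^ 2 - exp (2 / x) - x ^ 2 * exp (1 / x)) = exp (2 / x) ↔
      d * xiH x = 1 := by
  have hscale : xiH x * exp (2 / x) =
      2 * x * exp (1 / x) + x ^ 2 - exp (2 / x) - x ^ 2 * exp (1 / x) := by
    have h₁ : exp (-x⁻¹) * exp (2 / x) = exp (1 / x) := by rw [← exp_add]; ring_nf
    have h₂ : exp (-x⁻¹) ^ 2 * exp (2 / x) = 1 := by
      rw [← exp_nat_mul, ← exp_add]; ring_nf; exact exp_zero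
    unfold xiH
    linear_combination (2 * x - x ^ 2) * h₁ + x ^ 2 * h₂
  rw [← hscale, ← mul_assoc]
  exact ⟨fun h ↦ mul_right_cancel₀ (exp_pos _).ne' (h.trans (one_mul _).symm),
    fun h ↦ by rw [h, one_mul]⟩

theorem hasDerivAt_xiH {x : ℝ} (hx : x ≠ 0) :
    HasDerivAt xiH (exp (-x⁻¹) * (1 + 2 / x - 2 * x + (2 * x + 2) * exp (-x⁻¹))) x := by
  have hu : HasDerivAt (fun y ↦ exp (-y⁻¹)) (exp (-x⁻¹) * (x ^ 2)⁻¹) x := by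
    simpa using (hasDerivAt_inv hx).neg.exp
  refine HasDerivAt.congr_deriv (((((hasDerivAt_id' x).const_mul 2).fun_mul hu).fun_add
    (((hasDerivAt_id' x).fun_mul hu).fun_pow 2) |>.sub_const 1).fun_sub
      ((hasDerivAt_pow 2 x).fun_mul hu)) ?_
  field_simp
  ring

theorem half_le_exp_neg_inv {x : ℝ} (hx : (log 2)⁻¹ ≤ x) : 1 / 2 ≤ exp (-x⁻¹) := by
  have hlog : 0 < log 2 := log_pos one_lt_two
  have hinv : x⁻¹ ≤ log 2 := (inv_le_comm₀ ((inv_pos.2 hlog).trans_le hx) hlog).2 hx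
  calc 1 / 2 = exp (-log 2) := by rw [exp_neg, exp_log two_pos, one_div]
    _ ≤ exp (-x⁻¹) := exp_le_exp.2 (neg_le_neg hinv)

theorem strictMonoOn_xiH : StrictMonoOn xiH (Icc (log 2)⁻¹ 2) := by
  have hpos : 0 < (log 2)⁻¹ := inv_pos.2 (log_pos one_lt_two)
  refine strictMonoOn_of_deriv_pos (convex_Icc _ _)
    (fun x hx ↦ (hasDerivAt_xiH (hpos.trans_le hx.1).ne').continuousAt.continuousWithinAt) ?_
  rw [interior_Icc]
  rintro x ⟨hlo, hhi⟩
  have hx : 0 < x := hpos.trans hlo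
  have hu : 1 / 2 ≤ exp (-x⁻¹) := half_le_exp_neg_inv hlo.le
  have hquad : 0 < 2 + 2 / x - x := by linarith [show 0 < 2 / x by positivity]
  rw [(hasDerivAt_xiH hx.ne').deriv]
  exact mul_pos (exp_pos _) (by nlinarith)

theorem Icc_three_halves_two_subset : Icc (3 / 2 : ℝ) 2 ⊆ Icc (log 2)⁻¹ 2 := by
  refine Icc_subset_Icc_left ?_
  rw [inv_le_comm₀ (log_pos one_lt_two) (by norm_num)]
  linarith [log_two_gt_d9]

/-- `Ξ_d` is decreasing in `d`. -/
theorem xi_decreasing (d₁ d₂ : ℝ) (hd₁ : 2 ≤ d₁) (hd : d₁ ≤ d₂)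
    (Ξ₁ Ξ₂ : ℝ)
    (hΞ₁mem : Ξ₁ ∈ Set.Icc (3 / 2 : ℝ) 2) (hΞ₂mem : Ξ₂ ∈ Set.Icc (3 / 2 : ℝ) 2)
    (hΞ₁ : d₁ * (2 * Ξ₁ * Real.exp (1 / Ξ₁) + Ξ₁ ^ 2 - Real.exp (2 / Ξ₁)
        - Ξ₁ ^ 2 * Real.exp (1 / Ξ₁)) = Real.exp (2 / Ξ₁))
    (hΞ₂ : d₂ * (2 * Ξ₂ * Real.exp (1 / Ξ₂) + Ξ₂ ^ 2 - Real.exp (2 / Ξ₂)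
        - Ξ₂ ^ 2 * Real.exp (1 / Ξ₂)) = Real.exp (2 / Ξ₂)) :
    Ξ₂ ≤ Ξ₁ := by
  have h₁ : xiH Ξ₁ = 1 / d₁ :=
    eq_one_div_of_mul_eq_one_right ((mul_xiH_eq_one_iff _ _).1 hΞ₁)
  have h₂ : xiH Ξ₂ = 1 / d₂ :=
    eq_one_div_of_mul_eq_one_right ((mul_xiH_eq_one_iff _ _).1 hΞ₂)
  refine (strictMonoOn_xiH.le_iff_le (Icc_three_halves_two_subset hΞ₂mem)
    (Icc_three_halves_two_subset hΞ₁mem)).1 ?_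
  rw [h₁, h₂]
  exact one_div_le_one_div_of_le (by linarith) hd
end

section
/- Let 2 ≤ d₁ ≤ d₂ be real numbers, and for i = 1, 2 let Ξᵢ ∈ [1.51, 2.05] satisfy dᵢ·(2Ξᵢ·e^{1/Ξᵢ} + Ξᵢ² − e^{2/Ξᵢ} − Ξᵢ²·e^{1/Ξᵢ}) = e^{2/Ξᵢ}. Then d₁·Ξ₁ ≤ d₂·Ξ₂; i.e., d·Ξ_d is monotonically increasing in d. -/
/-!
Dividing the defining equation by `Ξ · e^{2/Ξ}` turns it into `d · Ξ · xiRecip Ξ = 1`, so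
`d · Ξ_d = 1 / xiRecip Ξ_d`. A third-order Taylor bound for `e^{-1/x}` shows that `xiRecip` is
increasing on `[1.51, 2.05]`. Hence if `Ξ₂ < Ξ₁` then `xiRecip Ξ₂ ≤ xiRecip Ξ₁` and
`d₁ Ξ₁ ≤ d₂ Ξ₂`; if `Ξ₁ ≤ Ξ₂` the claim is immediate from `d₁ ≤ d₂`.
-/

open Real

noncomputable def xiRecip (x : ℝ) : ℝ :=
  2 * exp (-x⁻¹) + x * exp (-(2 * x⁻¹)) - x * exp (-x⁻¹) - x⁻¹

lemma abs_exp_neg_sub_taylor_le {s : ℝ} (h0 : 0 ≤ s) (h1 : s ≤ 1) :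
    |exp (-s) - (1 - s + s ^ 2 / 2 - s ^ 3 / 6)| ≤ 5 * s ^ 4 / 96 := by
  have h := Real.exp_bound (x := -s) (by rwa [abs_neg, abs_of_nonneg h0]) (n := 4) (by norm_num)
  simp only [Finset.sum_range_succ, Finset.sum_range_zero] at h
  rw [abs_neg, abs_of_nonneg h0] at h
  norm_num [Nat.factorial] at h
  rw [abs_le] at h ⊢
  constructor <;> nlinarith [h.1, h.2]

lemma hasDerivAt_xiRecip {x : ℝ} (hx : x ≠ 0) :
    HasDerivAt xiRecip
      ((2 * (x ^ 2)⁻¹ - 1 - x⁻¹) * exp (-x⁻¹)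
        + (1 + 2 * x⁻¹) * exp (-(2 * x⁻¹)) + (x ^ 2)⁻¹) x := by
  have hE₁ : HasDerivAt (fun y : ℝ => exp (-y⁻¹)) (exp (-x⁻¹) * (x ^ 2)⁻¹) x := by
    simpa using (hasDerivAt_inv hx).fun_neg.exp
  have hE₂ : HasDerivAt (fun y : ℝ => exp (-(2 * y⁻¹)))
      (exp (-(2 * x⁻¹)) * (2 * (x ^ 2)⁻¹)) x := by
    simpa using ((hasDerivAt_inv hx).const_mul (2 : ℝ)).fun_neg.exp
  refine HasDerivAt.congr_deriv (f := xiRecip)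
    ((((hE₁.const_mul 2).add ((hasDerivAt_id x).mul hE₂)).sub
      ((hasDerivAt_id x).mul hE₁)).sub (hasDerivAt_inv hx)) ?_
  simp only [id_eq]
  field_simp
  ring

-- the derivative of `xiRecip` at `x = 1 / s`
lemma xiRecip_deriv_pos_of_inv {s : ℝ} (hs₀ : 0.48 ≤ s) (hs₁ : s ≤ 0.67) :
    0 < (2 * s ^ 2 - 1 - s) * exp (-s) + (1 + 2 * s) * exp (-s) ^ 2 + s ^ 2 := by
  have hb := abs_le.mp (abs_exp_neg_sub_taylor_le (by linarith) (by linarith))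
  nlinarith [hb.1, hb.2, sq_nonneg (exp (-s) - 1 + s), sq_nonneg (s - 0.5),
    sq_nonneg (exp (-s) - 0.5)]

lemma strictMonoOn_xiRecip : StrictMonoOn xiRecip (Set.Icc (1.51 : ℝ) 2.05) := by
  have hne {x : ℝ} (hx : 1.51 ≤ x) : x ≠ 0 := by positivity
  apply strictMonoOn_of_deriv_pos (convex_Icc _ _)
  · exact fun x hx => (hasDerivAt_xiRecip (hne hx.1)).continuousAt.continuousWithinAt
  · intro x hx
    rw [interior_Icc] at hx
    rw [(hasDerivAt_xiRecip (hne hx.1.le)).deriv]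
    have hx₀ : 0 < x := by linarith [hx.1]
    have hsx : x⁻¹ * x = 1 := inv_mul_cancel₀ hx₀.ne'
    have hE₂ : exp (-(2 * x⁻¹)) = exp (-x⁻¹) ^ 2 := by
      rw [← Real.exp_nat_mul]; ring_nf
    rw [show (x ^ 2)⁻¹ = x⁻¹ ^ 2 by ring, hE₂]
    exact xiRecip_deriv_pos_of_inv (by nlinarith [hx.2]) (by nlinarith [hx.1])

lemma mul_mul_xiRecip_eq_one {d x : ℝ} (hx : x ≠ 0)
    (h : d * (2 * x * exp (1 / x) + x ^ 2 - exp (2 / x) - x ^ 2 * exp (1 / x)) = exp (2 / x)) :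
    d * x * xiRecip x = 1 := by
  have hE₁ : exp (-x⁻¹) = (exp (1 / x))⁻¹ := by rw [← Real.exp_neg, one_div]
  have hE₂ : exp (2 / x) = exp (1 / x) ^ 2 := by rw [← Real.exp_nat_mul]; ring_nf
  have hE₂' : exp (-(2 * x⁻¹)) = (exp (1 / x) ^ 2)⁻¹ := by
    rw [← hE₂, ← Real.exp_neg]; ring_nf
  rw [xiRecip, hE₁, hE₂']
  rw [hE₂] at h
  have := exp_pos (1 / x)
  field_simp
  linear_combination h

/-- `d · Ξ_d` is monotonically increasing in `d`. -/
theorem d_xi_increasing (d₁ d₂ : ℝ) (hd₁ : 2 ≤ d₁) (hd : d₁ ≤ d₂)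
    (Ξ₁ Ξ₂ : ℝ)
    (hΞ₁mem : Ξ₁ ∈ Set.Icc (1.51 : ℝ) 2.05) (hΞ₂mem : Ξ₂ ∈ Set.Icc (1.51 : ℝ) 2.05)
    (hΞ₁ : d₁ * (2 * Ξ₁ * Real.exp (1 / Ξ₁) + Ξ₁ ^ 2 - Real.exp (2 / Ξ₁)
        - Ξ₁ ^ 2 * Real.exp (1 / Ξ₁)) = Real.exp (2 / Ξ₁))
    (hΞ₂ : d₂ * (2 * Ξ₂ * Real.exp (1 / Ξ₂) + Ξ₂ ^ 2 - Real.exp (2 / Ξ₂)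
        - Ξ₂ ^ 2 * Real.exp (1 / Ξ₂)) = Real.exp (2 / Ξ₂)) :
    d₁ * Ξ₁ ≤ d₂ * Ξ₂ := by
  have hΞ₁pos : 0 < Ξ₁ := by linarith [hΞ₁mem.1]
  have hΞ₂pos : 0 < Ξ₂ := by linarith [hΞ₂mem.1]
  rcases le_or_gt Ξ₁ Ξ₂ with hle | hlt
  · exact mul_le_mul hd hle hΞ₁pos.le (by linarith)
  have h₁ := mul_mul_xiRecip_eq_one hΞ₁pos.ne' hΞ₁
  have h₂ := mul_mul_xiRecip_eq_one hΞ₂pos.ne' hΞ₂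
  have hmono : xiRecip Ξ₂ ≤ xiRecip Ξ₁ := strictMonoOn_xiRecip.monotoneOn hΞ₂mem hΞ₁mem hlt.le
  have hprod : 0 ≤ (d₁ * Ξ₁) * (d₂ * Ξ₂) := by
    have : 0 < d₁ := by linarith
    have : 0 < d₂ := by linarith
    positivity
  calc d₁ * Ξ₁ = (d₁ * Ξ₁) * (d₂ * Ξ₂) * xiRecip Ξ₂ := by
        linear_combination (-(d₁ * Ξ₁)) * h₂
    _ ≤ (d₁ * Ξ₁) * (d₂ * Ξ₂) * xiRecip Ξ₁ := mul_le_mul_of_nonneg_left hmono hprod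
    _ = d₂ * Ξ₂ := by linear_combination (d₂ * Ξ₂) * h₁
end

section
/- Let d_r ≥ 2 be a real number, let w > 0 satisfy w·e^w = 1.27, and let u > 0 satisfy u·e^u = (d_r − 1)/(2(d_r + 1)). Then the function f(z) = (z·d_r)^{d_r}·((d_r+1)·e^{w} − (d_r−1)·z) satisfies f(z) ≤ f(1/(2u)) for all z ∈ [0, 1/(2u)]; i.e., the maximum of f on [0, 1/(2u)] is attained at z = 1/(2u). -/
/-!
Write `t = (d_r - 1)/(2(d_r + 1))`. Since `u e^u = t`, the right endpoint is
`1/(2u) = (d_r + 1) e^u / (d_r - 1)`. The derivative of `f` at `z > 0` is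
`d_r (d_r + 1) (z d_r)^{d_r - 1} (d_r e^w - (d_r - 1) z)`, so `f` increases on `[0, 1/(2u)]`
as soon as `(d_r + 1) e^u ≤ d_r e^w`. This follows from the numerical bounds `e^w ≥ 1.8` and
`e^u ≤ e^t ≤ 0.9 (1 + 2t)` for `t ∈ [1/6, 1/2]`, because `0.9 (1 + 2t)(d_r + 1) = 1.8 d_r`.
-/

open Real Set

lemma one_point_eight_le_exp_of_mul_exp_eq {w : ℝ} (hw : w * exp w = 1.27) : 1.8 ≤ exp w := by
  by_contra! h
  have hw_lb : 0.7 < w := by nlinarith [exp_pos w]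
  nlinarith [quadratic_le_exp_of_nonneg (by linarith : (0 : ℝ) ≤ w)]

lemma exp_le_linear_of_mem_Icc {t : ℝ} (ht : t ∈ Icc (1 / 6 : ℝ) (1 / 2)) :
    exp t ≤ 0.9 * (1 + 2 * t) := by
  obtain ⟨ht₀, ht₁⟩ := ht
  have h := exp_bound' (x := t) (by linarith) (by linarith) (n := 3) (by norm_num)
  norm_num [Finset.sum_range_succ, Nat.factorial] at h
  nlinarith [mul_nonneg (sub_nonneg.2 ht₀) (sub_nonneg.2 ht₁)]

lemma monotoneOn_rpow_mul_sub {p a b M : ℝ} (hp : 0 ≤ p) (hb : 0 ≤ b)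
    (hM : (p + 1) * b * M ≤ p * a) : MonotoneOn (fun z ↦ z ^ p * (a - b * z)) (Icc 0 M) := by
  have hderiv : ∀ z ∈ Ioo 0 M,
      HasDerivAt (fun z ↦ z ^ p * (a - b * z)) (z ^ (p - 1) * (p * a - (p + 1) * b * z)) z := by
    intro z hz
    have hz₀ : z ≠ 0 := hz.1.ne'
    have h := (hasDerivAt_rpow_const (p := p) (Or.inl hz₀)).mul
      (((hasDerivAt_id z).const_mul b).const_sub a)
    refine h.congr_deriv ?_
    rw [rpow_sub_one hz₀, id]
    field_simp
    ring
  refine monotoneOn_of_hasDerivWithinAt_nonneg (convex_Icc 0 M) ?_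
    (fun z hz ↦ (hderiv z (by rwa [interior_Icc] at hz)).hasDerivWithinAt) ?_
  · exact ((continuous_id.rpow_const fun _ ↦ Or.inr hp).mul
      (continuous_const.sub (continuous_const.mul continuous_id))).continuousOn
  · rw [interior_Icc]
    intro z hz
    have : (p + 1) * b * z ≤ (p + 1) * b * M := by gcongr; exact hz.2.le
    exact mul_nonneg (rpow_nonneg hz.1.le _) (by linarith)

lemma add_one_mul_exp_le_mul_exp {d u w : ℝ} (hd : 2 ≤ d) (hw : w * exp w = 1.27)
    (hu : u * exp u = (d - 1) / (2 * (d + 1))) : (d + 1) * exp u ≤ d * exp w := by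
  have ht : (d - 1) / (2 * (d + 1)) * (2 * (d + 1)) = d - 1 := div_mul_cancel₀ _ (by positivity)
  generalize (d - 1) / (2 * (d + 1)) = t at hu ht
  have ht_mem : t ∈ Icc (1 / 6 : ℝ) (1 / 2) := ⟨by nlinarith, by nlinarith⟩
  have hu₀ : 0 < u := pos_of_mul_pos_left (hu ▸ by linarith [ht_mem.1]) (exp_pos u).le
  have hut : u ≤ t := by nlinarith [add_one_le_exp u]
  calc (d + 1) * exp u ≤ (d + 1) * (0.9 * (1 + 2 * t)) := by
        gcongr
        exact (exp_le_exp.2 hut).trans (exp_le_linear_of_mem_Icc ht_mem)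
    _ = 1.8 * d := by linear_combination 0.9 * ht
    _ ≤ d * exp w := by nlinarith [one_point_eight_le_exp_of_mul_exp_eq hw]

theorem z_lemma_general (dr : ℝ) (hdr : 2 ≤ dr)
    (w : ℝ) (hweq : w * Real.exp w = 1.27)
    (u : ℝ) (hueq : u * Real.exp u = (dr - 1) / (2 * (dr + 1))) :
    ∀ z ∈ Set.Icc (0 : ℝ) (1 / (2 * u)),
      (z * dr) ^ dr * ((dr + 1) * Real.exp w - (dr - 1) * z)
        ≤ (1 / (2 * u) * dr) ^ dr * ((dr + 1) * Real.exp w - (dr - 1) * (1 / (2 * u))) := by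
  intro z hz
  set M := 1 / (2 * u) with hM_def
  have hM₀ : 0 ≤ M := hz.1.trans hz.2
  have hu₀ : u ≠ 0 := left_ne_zero_of_mul (hueq ▸ (div_pos (by linarith) (by linarith)).ne')
  have hM : (dr - 1) * M = (dr + 1) * exp u := by
    have h2u : 2 * u * ((dr + 1) * exp u) = dr - 1 := by
      rw [show 2 * u * ((dr + 1) * exp u) = 2 * (dr + 1) * (u * exp u) by ring, hueq]
      field_simp
    rw [hM_def, ← h2u]
    field_simp
  have hmono := monotoneOn_rpow_mul_sub (p := dr) (a := (dr + 1) * exp w) (b := dr - 1) (M := M)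
    (by linarith) (by linarith) (by
      rw [mul_assoc, hM, mul_left_comm dr]
      exact mul_le_mul_of_nonneg_left (add_one_mul_exp_le_mul_exp hdr hweq hueq) (by linarith))
  have hd₀ : 0 ≤ dr := by linarith
  rw [mul_rpow hz.1 hd₀, mul_rpow hM₀ hd₀, mul_right_comm, mul_right_comm (M ^ dr)]
  exact mul_le_mul_of_nonneg_right (hmono hz ⟨hM₀, le_rfl⟩ hz.2) (rpow_nonneg hd₀ _)

/-- The maximum of `z ↦ (z d_r)^{d_r} ((d_r+1) e^{W(1.27)} - (d_r-1) z)` on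
`[0, 1/(2 W((d_r-1)/(2(d_r+1))))]` is attained at the right endpoint. -/
theorem z_lemma (dr : ℝ) (hdr : 2 ≤ dr)
    (w : ℝ) (hw : 0 < w) (hweq : w * Real.exp w = 1.27)
    (u : ℝ) (hu : 0 < u) (hueq : u * Real.exp u = (dr - 1) / (2 * (dr + 1))) :
    ∀ z ∈ Set.Icc (0 : ℝ) (1 / (2 * u)),
      (z * dr) ^ dr * ((dr + 1) * Real.exp w - (dr - 1) * z)
        ≤ (1 / (2 * u) * dr) ^ dr * ((dr + 1) * Real.exp w - (dr - 1) * (1 / (2 * u))) :=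
  z_lemma_general dr hdr w hweq u hueq
end

section
/- For every real number d ≥ 2, the function x ↦ x²·e^{−1/x} − x² + (2 − 1/d)·x is strictly increasing on (0, ∞). -/
/-!
With `c = 2 - 1/d`, the derivative is `(2x + 1) e^{-1/x} - 2x + c`. Substituting `t = 1/x`, the
bound `(2 + t) e^{-t} ≥ 2 - t` for `t ≥ 0` gives `(2x + 1) e^{-1/x} ≥ 2x - 1`, so the derivative is
at least `c - 1 = 1 - 1/d > 0`. That bound holds because `(2 + t) e^{-t} + t` has derivative
`1 - (1 + t) e^{-t} ≥ 0`, by `e^t ≥ 1 + t`.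
-/

open Real Set

lemma hasDerivAt_two_add_mul_exp_neg_add (t : ℝ) :
    HasDerivAt (fun s => (2 + s) * exp (-s) + s) (1 - (1 + t) * exp (-t)) t := by
  refine ((((hasDerivAt_id' t).const_add 2).fun_mul (hasDerivAt_neg t).exp).fun_add
    (hasDerivAt_id' t)).congr_deriv ?_
  ring

lemma one_add_mul_exp_neg_le_one (t : ℝ) : (1 + t) * exp (-t) ≤ 1 := by
  rw [exp_neg, ← div_eq_mul_inv, div_le_one (exp_pos t)]
  linarith [add_one_le_exp t]

lemma two_sub_le_two_add_mul_exp_neg {t : ℝ} (ht : 0 ≤ t) : 2 - t ≤ (2 + t) * exp (-t) := by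
  have hmono : MonotoneOn (fun s => (2 + s) * exp (-s) + s) (Ici 0) :=
    monotoneOn_of_hasDerivWithinAt_nonneg (convex_Ici 0)
      (fun s _ => (hasDerivAt_two_add_mul_exp_neg_add s).continuousAt.continuousWithinAt)
      (fun s _ => (hasDerivAt_two_add_mul_exp_neg_add s).hasDerivWithinAt)
      (fun s _ => sub_nonneg.2 (one_add_mul_exp_neg_le_one s))
  have := hmono self_mem_Ici ht ht
  simp only [add_zero, neg_zero, exp_zero, mul_one] at this
  linarith

lemma two_mul_sub_one_le_mul_exp_neg_inv {x : ℝ} (hx : 0 < x) :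
    2 * x - 1 ≤ (2 * x + 1) * exp (-(1 / x)) := by
  have h := mul_le_mul_of_nonneg_left (two_sub_le_two_add_mul_exp_neg (one_div_pos.2 hx).le) hx.le
  have hx0 : x ≠ 0 := hx.ne'
  calc 2 * x - 1 = x * (2 - 1 / x) := by field_simp
    _ ≤ x * ((2 + 1 / x) * exp (-(1 / x))) := h
    _ = (2 * x + 1) * exp (-(1 / x)) := by field_simp

lemma hasDerivAt_sq_mul_exp_neg_inv {x : ℝ} (hx : x ≠ 0) :
    HasDerivAt (fun y => y ^ 2 * exp (-(1 / y))) ((2 * x + 1) * exp (-(1 / x))) x := by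
  have hinv : HasDerivAt (fun y : ℝ => -(1 / y)) (1 / x ^ 2) x := by
    simpa only [one_div, neg_neg] using (hasDerivAt_inv hx).fun_neg
  refine ((hasDerivAt_pow 2 x).fun_mul hinv.exp).congr_deriv ?_
  field_simp
  norm_num
  ring

lemma strictMonoOn_sq_mul_exp_neg_inv_sub_sq_add {c : ℝ} (hc : 1 < c) :
    StrictMonoOn (fun x => x ^ 2 * exp (-(1 / x)) - x ^ 2 + c * x) (Ioi 0) := by
  have hderiv : ∀ x ∈ Ioi (0 : ℝ), HasDerivAt (fun x => x ^ 2 * exp (-(1 / x)) - x ^ 2 + c * x)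
      ((2 * x + 1) * exp (-(1 / x)) - 2 * x + c) x := fun x hx => by
    refine (((hasDerivAt_sq_mul_exp_neg_inv hx.ne').fun_sub (hasDerivAt_pow 2 x)).fun_add
      ((hasDerivAt_id' x).const_mul c)).congr_deriv ?_
    ring
  refine strictMonoOn_of_hasDerivWithinAt_pos (convex_Ioi 0)
    (fun x hx => (hderiv x hx).continuousAt.continuousWithinAt)
    (fun x hx => (hderiv x (interior_subset hx)).hasDerivWithinAt) fun x hx => ?_
  rw [interior_Ioi] at hx
  linarith [two_mul_sub_one_le_mul_exp_neg_inv hx]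

/-- For every real `d ≥ 2`, the function `x ↦ x² e^{-1/x} - x² + (2 - 1/d) x` is
strictly increasing on `(0, ∞)`. -/
theorem xi_defining_strict_mono (d : ℝ) (hd : 2 ≤ d) :
    StrictMonoOn (fun x : ℝ => x ^ 2 * Real.exp (-(1 / x)) - x ^ 2 + (2 - 1 / d) * x)
      (Set.Ioi 0) := by
  refine strictMonoOn_sq_mul_exp_neg_inv_sub_sq_add ?_
  have : 1 / d < 1 := (div_lt_one (by linarith)).2 (by linarith)
  linarith
end

section
/- For every real number x > 1: e^{−1/x}·(1 + 1/x) + (1/x²)·e^{1/x} > 1. -/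
/-- For every real `x > 1`: `e^{-1/x}(1 + 1/x) + (1/x²) e^{1/x} > 1`. -/
theorem deriv_positive_aux (x : ℝ) (hx : 1 < x) :
    1 < Real.exp (-(1 / x)) * (1 + 1 / x) + 1 / x ^ 2 * Real.exp (1 / x) := by
  have hx0 : (0:ℝ) < x := lt_trans one_pos hx
  set t : ℝ := 1 / x with ht
  have ht0 : 0 < t := by positivity
  have ht1 : t < 1 := by rw [ht, div_lt_one hx0]; exact hx
  have htle : |t| ≤ 1 := by rw [abs_of_pos ht0]; linarith
  have hb := Real.exp_bound htle (n := 2) (by norm_num)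
  simp [Finset.sum_range_succ] at hb
  have hb' : Real.exp t ≤ 1 + t + 3/4 * t^2 := by
    have := abs_le.mp hb
    nlinarith [this.2, sq_abs t]
  have hEpos := Real.exp_pos t
  have hE1 : 1 ≤ Real.exp t := Real.one_le_exp ht0.le
  have hx2 : 1 / x ^ 2 = t ^ 2 := by rw [ht]; ring
  rw [Real.exp_neg, hx2]
  have hinv : Real.exp t * (Real.exp t)⁻¹ = 1 := mul_inv_cancel₀ hEpos.ne'
  have key : Real.exp t < (1 + t) + t ^ 2 * (Real.exp t * Real.exp t) := by
    have hEE : 1 ≤ Real.exp t * Real.exp t := by nlinarith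
    nlinarith [mul_pos ht0 ht0, mul_le_mul_of_nonneg_left hEE (sq_nonneg t)]
  have hinvpos : 0 < (Real.exp t)⁻¹ := inv_pos.mpr hEpos
  nlinarith [mul_lt_mul_of_pos_left key hinvpos, hinv]
end

section
/- Let d_r ≥ 2 be a real number, let w > 0 satisfy w·e^w = 1.27, and let u > 0 satisfy u·e^u = (d_r − 1)/(2(d_r + 1)). Then (d_r/(d_r − 1))·e^{w} ≥ 1/(2u). -/
/-- `(d_r/(d_r-1)) e^{W(1.27)} ≥ 1/(2 W((d_r-1)/(2(d_r+1))))` for `d_r ≥ 2`,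
with the Lambert-W values encoded implicitly. -/
theorem z_bound_aux (dr : ℝ) (hdr : 2 ≤ dr)
    (w : ℝ) (hw : 0 < w) (hweq : w * Real.exp w = 1.27)
    (u : ℝ) (hu : 0 < u) (hueq : u * Real.exp u = (dr - 1) / (2 * (dr + 1))) :
    1 / (2 * u) ≤ dr / (dr - 1) * Real.exp w := by
  have hdr1 : (0:ℝ) < dr - 1 := by linarith
  have hdr2 : (0:ℝ) < dr + 1 := by linarith
  set E := Real.exp u with hE
  set W := Real.exp w with hW
  have hE1 : 1 ≤ E := by
    rw [hE]; have := Real.one_le_exp_iff.mpr hu.le; linarith [Real.one_le_exp hu.le]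
  have hWpos : 0 < W := Real.exp_pos w
  have hEpos : 0 < E := Real.exp_pos u
  -- t bounds
  have ht1 : (1:ℝ)/6 ≤ u * E := by
    rw [hueq, div_le_div_iff₀ (by norm_num) (by positivity)]; nlinarith
  have ht2 : u * E < 1/2 := by
    rw [hueq, div_lt_div_iff₀ (by positivity) (by norm_num)]; nlinarith
  -- u < 1/2
  have hu2 : u < 1/2 := by nlinarith
  -- e^u ≤ 1.7
  have hE17 : E ≤ 1.7 := by
    have h1 : E ≤ Real.exp (1/2) := by rw [hE]; exact Real.exp_le_exp.mpr (by linarith)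
    have h2 : (Real.exp (1/2))^2 = Real.exp 1 := by
      rw [← Real.exp_nat_mul]; norm_num
    have h3 : Real.exp 1 < 2.7182818286 := Real.exp_one_lt_d9
    nlinarith [Real.exp_pos (1/2)]
  -- u ≥ 0.098
  have hu098 : 0.098 ≤ u := by nlinarith
  -- 1 - u ≤ e^{-u}, i.e. E*(1-u) ≤ 1
  have hEinv : E * (1 - u) ≤ 1 := by
    have h1 : -u + 1 ≤ Real.exp (-u) := Real.add_one_le_exp (-u)
    have h2 : Real.exp (-u) * E = 1 := by
      rw [hE, ← Real.exp_add]; simp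
    nlinarith
  have hE1u : 1 + u ≤ E := by
    have := Real.add_one_le_exp u; rw [hE]; linarith
  -- w ≤ 0.69
  have hw069 : w ≤ 0.69 := by
    by_contra h
    push_neg at h
    have h1 : Real.exp 0.69 < W := by rw [hW]; exact Real.exp_lt_exp.mpr h
    have h2 : (0.1725 + 1)^4 ≤ Real.exp 0.69 := by
      have h3 : (0.1725:ℝ) + 1 ≤ Real.exp 0.1725 := Real.add_one_le_exp 0.1725
      have h4 : (Real.exp 0.1725)^4 = Real.exp 0.69 := by
        rw [← Real.exp_nat_mul]; norm_num
      calc (0.1725 + 1:ℝ)^4 ≤ (Real.exp 0.1725)^4 := by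
            apply pow_le_pow_left₀ (by norm_num) h3
        _ = Real.exp 0.69 := h4
    nlinarith
  -- e^w ≥ 1.84
  have hW184 : 1.84 ≤ W := by nlinarith
  -- key inequality: 2E ≤ W(1+2uE)
  have key : 2 * E ≤ W * (1 + 2 * u * E) := by
    nlinarith [mul_pos hu hEpos, mul_nonneg (by norm_num : (0:ℝ) ≤ 0.098) (sub_nonneg.mpr hE1),
      mul_le_mul_of_nonneg_left hEinv hWpos.le,
      mul_le_mul_of_nonneg_right hW184 (mul_nonneg hu.le hEpos.le)]
  -- finish
  rw [div_le_iff₀ (by positivity), div_mul_eq_mul_div, div_mul_eq_mul_div, le_div_iff₀ hdr1]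
  -- goal: 1 * (dr - 1) ≤ dr * W * (2 * u)
  have hdrm1 : dr - 1 = 2 * (dr + 1) * (u * E) := by
    rw [hueq]; field_simp
  nlinarith [mul_le_mul_of_nonneg_left key (mul_nonneg hdr2.le hu.le),
    mul_pos hu hEpos]
end

section
/- Let d ≥ 1 be a natural number and let Ψ > 0 be a real number satisfying (d+1)(Ψ+1)^d = Ψ^{d+1}. Define μ̂ = d·(Ψ+1)^{d−1}/((d+1)·Ψ^d). Then 0 < μ̂ < 1/(d+1), and ((Ψ+1)^d − μ̂·Ψ^{d+1})/(1/(d+1) − μ̂) = Ψ^{d+1}. -/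
/-- The choice `μ̂ = d(Ψ+1)^{d-1}/((d+1)Ψ^d)` lies in `(0, 1/(d+1))` and yields the
competitive ratio `Ψ^{d+1}`. -/
theorem mu_hat_properties (d : ℕ) (hd : 1 ≤ d) (Ψ : ℝ) (hΨpos : 0 < Ψ)
    (hΨ : ((d : ℝ) + 1) * (Ψ + 1) ^ d = Ψ ^ (d + 1)) :
    0 < (d : ℝ) * (Ψ + 1) ^ (d - 1) / (((d : ℝ) + 1) * Ψ ^ d)
    ∧ (d : ℝ) * (Ψ + 1) ^ (d - 1) / (((d : ℝ) + 1) * Ψ ^ d) < 1 / ((d : ℝ) + 1)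
    ∧ ((Ψ + 1) ^ d - (d : ℝ) * (Ψ + 1) ^ (d - 1) / (((d : ℝ) + 1) * Ψ ^ d) * Ψ ^ (d + 1))
        / (1 / ((d : ℝ) + 1) - (d : ℝ) * (Ψ + 1) ^ (d - 1) / (((d : ℝ) + 1) * Ψ ^ d))
      = Ψ ^ (d + 1) := by
  obtain ⟨n, rfl⟩ : ∃ n, d = n + 1 := ⟨d - 1, (Nat.succ_pred_eq_of_pos hd).symm⟩
  simp only [Nat.add_sub_cancel]
  push_cast at hΨ ⊢
  have h1 : 0 < Ψ + 1 := by linarith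
  have hA : (0:ℝ) < (Ψ + 1) ^ n := pow_pos h1 n
  have hP : (0:ℝ) < Ψ ^ (n + 1) := pow_pos hΨpos _
  have hd1 : (0:ℝ) < (n:ℝ) + 1 + 1 := by positivity
  have h2 : (Ψ + 1) ^ (n + 1) = (Ψ + 1) ^ n * (Ψ + 1) := pow_succ _ _
  have h3 : Ψ ^ (n + 1 + 1) = Ψ ^ (n + 1) * Ψ := pow_succ _ _
  have hlt : ((n:ℝ) + 1) * (Ψ + 1) ^ n / (((n:ℝ) + 1 + 1) * Ψ ^ (n + 1))
      < 1 / ((n:ℝ) + 1 + 1) := by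
    rw [div_lt_div_iff₀ (by positivity) hd1]
    have hx : ((n:ℝ) + 1) * Ψ < ((n:ℝ) + 1 + 1) * (Ψ + 1) := by
      have := Nat.cast_nonneg (α := ℝ) n
      nlinarith
    have key : ((n:ℝ) + 1) * (Ψ + 1) ^ n * Ψ < Ψ ^ (n + 1 + 1) := by
      rw [hΨ.symm, h2]
      nlinarith [mul_lt_mul_of_pos_right hx hA]
    nlinarith [key, hΨpos, h3]
  refine ⟨by positivity, hlt, ?_⟩
  have hne : 1 / ((n:ℝ) + 1 + 1)
      - ((n:ℝ) + 1) * (Ψ + 1) ^ n / (((n:ℝ) + 1 + 1) * Ψ ^ (n + 1)) ≠ 0 :=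
    ne_of_gt (by linarith [hlt] : (0:ℝ) < _)
  rw [div_eq_iff hne]
  field_simp
  linear_combination (Ψ ^ (n + 1)) * hΨ
end
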